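/- arXiv:1403.0927 — 4 statements merged into one kernel-verified Lean document; each statement's English description precedes it below -/
import Mathlib

section
/- Let A be a unital C*-algebra with stable rank one and let a, d ∈ A with 0 ≤ a ≤ 1 and 0 ≤ d ≤ 1. Suppose there exist b, c ∈ A with 0 ≤ b ≤ 1 and 0 ≤ c ≤ 1 such that ab = a, b ≾ c, and dc = c. Then 1 − d ≾ 1 − a. -/
open scoped ENNReal
open Metric Set
open scoped ComplexOrder

/-- Cuntz subequivalence of elements of a C*-algebra. -/
def CuntzLE {A : Type*} [CStarAlgebra A] (a b : A) : Prop :=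
  ∃ x : ℕ → A,
    Filter.Tendsto (fun n => ‖star (x n) * b * x n - a‖) Filter.atTop (nhds 0)

/-- Cuntz equivalence. -/
def CuntzEquiv {A : Type*} [CStarAlgebra A] (a b : A) : Prop :=
  CuntzLE a b ∧ CuntzLE b a

/-- A unital C*-algebra has stable rank one if invertibles are dense. -/
def HasStableRankOne (A : Type*) [CStarAlgebra A] : Prop :=
  Dense {a : A | IsUnit a}

/-- A C*-algebra is simple if its only closed two-sided ideals are trivial. -/
def IsSimpleCStarAlgebra (A : Type*) [CStarAlgebra A] : Prop :=
  ∀ I : TwoSidedIdeal A, IsClosed (I : Set A) → I = ⊥ ∨ I = ⊤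

/-- The canonical continuous `[0,1]`-valued function supported exactly on the open set `O`
(equal to `1` when `O` is the whole space). -/
noncomputable def fO {Ω : Type*} [MetricSpace Ω] (O : Set Ω) : C(Ω, ℂ) :=
  haveI := Classical.dec (O = Set.univ)
  if O = Set.univ then 1 else
    ⟨fun t => (↑(min 1 (infDist t Oᶜ)) : ℂ),
      Complex.continuous_ofReal.comp
        (continuous_const.min (continuous_infDist_pt Oᶜ))⟩

/-- The distance `D_c` between two unital homomorphisms `C(Ω) → A`. -/
noncomputable def Dc {A : Type*} [CStarAlgebra A] {Ω : Type*} [MetricSpace Ω]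
    (φ ψ : C(Ω, ℂ) →⋆ₐ[ℂ] A) : ℝ≥0∞ :=
  ⨆ (O : Set Ω) (_ : IsOpen O),
    ⨅ (d : ℝ) (_ : 0 < d)
      (_ : CuntzLE (φ (fO O)) (ψ (fO (thickening d O)))), ENNReal.ofReal d

/-- Tracial states, as linear functionals. -/
structure IsTracialState {A : Type*} [CStarAlgebra A] (τ : A →ₗ[ℂ] ℂ) : Prop where
  map_one : τ 1 = 1
  nonneg : ∀ a : A, 0 ≤ τ (star a * a)
  tracial : ∀ a b : A, τ (a * b) = τ (b * a)

/-- The function `f_ε` used in the definition of `d_τ`. -/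
noncomputable def cutoff (ε : ℝ) : ℝ → ℝ := fun t => min 1 (max ((2 / ε) * t - 1) 0)

/-- `d_τ(b) = lim_{ε → 0⁺} τ(f_ε(b)) = sup_{ε > 0} τ(f_ε(b))`. -/
noncomputable def dTau {A : Type*} [CStarAlgebra A] (τ : A →ₗ[ℂ] ℂ) (b : A) : ℝ :=
  ⨆ ε : {ε : ℝ // 0 < ε}, (τ (cfc (cutoff ε.1) b)).re

/-- Strict comparison for positive elements. -/
def StrictComparison (A : Type*) [CStarAlgebra A] [PartialOrder A] [StarOrderedRing A] : Prop :=
  ∀ a b : A, 0 ≤ a → 0 ≤ b →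
    (∀ τ : A →ₗ[ℂ] ℂ, IsTracialState τ → dTau τ a < dTau τ b) → CuntzLE a b

/-- A unital homomorphism `C(Ω) → A` has spectrum `X`. -/
def HomSpectrum {A : Type*} [CStarAlgebra A] {Ω : Type*} [MetricSpace Ω]
    (φ : C(Ω, ℂ) →⋆ₐ[ℂ] A) (X : Set Ω) : Prop :=
  ∀ f : C(Ω, ℂ), φ f = 0 ↔ ∀ t ∈ X, f t = 0

section dist
variable {A : Type*} [CStarAlgebra A] {Ω : Type*} [MetricSpace Ω]

/-- `r_O(φ, ψ)`. -/
noncomputable def rOfun (φ ψ : C(Ω, ℂ) →⋆ₐ[ℂ] A) (O : Set Ω) : ℝ≥0∞ :=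
  ⨅ (r : ℝ) (_ : 0 < r)
    (_ : ∀ τ : A →ₗ[ℂ] ℂ, IsTracialState τ →
      dTau τ (φ (fO O)) ≤ dTau τ (ψ (fO (thickening r O)))), ENNReal.ofReal r

/-- `D_T(φ, ψ)`. -/
noncomputable def DT (φ ψ : C(Ω, ℂ) →⋆ₐ[ℂ] A) : ℝ≥0∞ :=
  ⨆ (O : Set Ω) (_ : IsOpen O), rOfun φ ψ O

/-- `r_O⁺(φ, ψ)`. -/
noncomputable def rOplus (φ ψ : C(Ω, ℂ) →⋆ₐ[ℂ] A) (O : Set Ω) : ℝ≥0∞ :=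
  ⨅ (r : ℝ) (_ : 0 < r)
    (_ : ∀ τ : A →ₗ[ℂ] ℂ, IsTracialState τ →
      dTau τ (φ (fO O)) < dTau τ (ψ (fO (thickening r O)))), ENNReal.ofReal r

/-- `a(φ, ψ) = sup {dist(ζ, X) : ζ ∈ Y}`. -/
noncomputable def aSup (X Y : Set Ω) : ℝ≥0∞ :=
  ⨆ ζ ∈ Y, ENNReal.ofReal (infDist ζ X)

/-- `D^T(φ, ψ)`, where `X`, `Y` are the spectra of `φ`, `ψ`. -/
noncomputable def DTup (φ ψ : C(Ω, ℂ) →⋆ₐ[ℂ] A) (X Y : Set Ω) : ℝ≥0∞ :=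
  max (aSup X Y) (⨆ (O : Set Ω) (_ : IsOpen O) (_ : O ∩ X ≠ X), rOplus φ ψ O)

/-- `δ_T(φ, ψ)` (over open metric balls). -/
noncomputable def deltaT (φ ψ : C(Ω, ℂ) →⋆ₐ[ℂ] A) : ℝ≥0∞ :=
  ⨅ (r : ℝ) (_ : 0 < r)
    (_ : ∀ (c : Ω) (d : ℝ) (τ : A →ₗ[ℂ] ℂ), IsTracialState τ →
      dTau τ (φ (fO (ball c d))) ≤ dTau τ (ψ (fO (thickening r (ball c d))))),
    ENNReal.ofReal r

/-- `d_T(φ, ψ)`. -/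
noncomputable def dTdist (φ ψ : C(Ω, ℂ) →⋆ₐ[ℂ] A) : ℝ≥0∞ :=
  max (deltaT φ ψ) (deltaT ψ φ)

/-- `δ_c(φ, ψ)` (over open metric balls). -/
noncomputable def deltaC (φ ψ : C(Ω, ℂ) →⋆ₐ[ℂ] A) : ℝ≥0∞ :=
  ⨅ (r : ℝ) (_ : 0 < r)
    (_ : ∀ (c : Ω) (d : ℝ),
      CuntzLE (φ (fO (ball c d))) (ψ (fO (thickening r (ball c d))))),
    ENNReal.ofReal r

/-- `d_c(φ, ψ)`. -/
noncomputable def dCdist (φ ψ : C(Ω, ℂ) →⋆ₐ[ℂ] A) : ℝ≥0∞ :=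
  max (deltaC φ ψ) (deltaC ψ φ)

end dist

section normal
variable {A : Type*} [CStarAlgebra A]

/-- The closure of the unitary orbit of `x`. -/
def uOrbit (x : A) : Set A :=
  closure {y : A | ∃ u : unitary A, y = star (u : A) * x * (u : A)}

/-- The distance between the closures of the unitary orbits of `x` and `y`. -/
noncomputable def orbitDist (x y : A) : ℝ :=
  sInf {d : ℝ | ∃ a ∈ uOrbit x, ∃ b ∈ uOrbit y, d = ‖a - b‖}

/-- The homomorphism `C(sp(x) ∪ sp(y)) → A`, `f ↦ f(x)`, for a normal element `x`. -/
noncomputable def normalHomL (x y : A) (hx : IsStarNormal x) :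
    C((spectrum ℂ x ∪ spectrum ℂ y : Set ℂ), ℂ) →⋆ₐ[ℂ] A :=
  cfcHomSuperset hx Set.subset_union_left

/-- The homomorphism `C(sp(x) ∪ sp(y)) → A`, `f ↦ f(y)`, for a normal element `y`. -/
noncomputable def normalHomR (x y : A) (hy : IsStarNormal y) :
    C((spectrum ℂ x ∪ spectrum ℂ y : Set ℂ), ℂ) →⋆ₐ[ℂ] A :=
  cfcHomSuperset hy Set.subset_union_right

/-- Projections. -/
def IsProjection (p : A) : Prop := IsSelfAdjoint p ∧ IsIdempotentElem p

/-- Murray–von Neumann equivalence. -/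
def MvNEquiv (p q : A) : Prop := ∃ v : A, star v * v = p ∧ v * star v = q

/-- The hereditary C*-subalgebra generated by `a`, as a set. -/
def herGen (a : A) : Set A := closure {x : A | ∃ y : A, x = a * y * a}

/-- Connected component of `1` in the invertibles. -/
def Inv0 (A : Type*) [CStarAlgebra A] : Set A :=
  connectedComponentIn {a : A | IsUnit a} 1

end normal

/-- AF algebra. -/
def IsAF (A : Type*) [CStarAlgebra A] : Prop :=
  ∀ (F : Finset A) (ε : ℝ), 0 < ε →
    ∃ B : StarSubalgebra ℂ A, FiniteDimensional ℂ B ∧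
      ∀ a ∈ F, infDist a (B : Set A) < ε

/-- Tracial rank zero. -/
def TracialRankZero (A : Type*) [CStarAlgebra A] [PartialOrder A] [StarOrderedRing A] : Prop :=
  ∀ (ε : ℝ), 0 < ε → ∀ (F : Finset A) (a : A), 0 ≤ a → a ≠ 0 →
    ∃ (B : StarSubalgebra ℂ A) (p : A),
      FiniteDimensional ℂ B ∧ IsProjection p ∧ p ∈ B ∧
      (∀ b ∈ B, p * b = b ∧ b * p = b) ∧
      (∀ c ∈ F, ‖p * c - c * p‖ < ε ∧ infDist (p * c * p) (B : Set A) < ε) ∧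
      ∃ q : A, IsProjection q ∧ q ∈ herGen a ∧ MvNEquiv (1 - p) q

/-- `ρ₁(x, y)`. -/
noncomputable def rho1 {A : Type*} [CStarAlgebra A] (x y : A) : ℝ :=
  sSup {r : ℝ | ∃ lam : ℂ, lam ∉ spectrum ℂ x ∪ spectrum ℂ y ∧
    (algebraMap ℂ A lam - x) * Ring.inverse (algebraMap ℂ A lam - y) ∉ Inv0 A ∧
    r = infDist lam (spectrum ℂ x) + infDist lam (spectrum ℂ y)}

/-!
Write `b ≈ t* t` with `t = c^{1/2} x`, so that `t t* (1 - d) = 0`. By stable rank one `t` is close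
to an invertible `z`, and the unitary `u` of the polar decomposition of `z*` satisfies
`t* t u ≈ u t t*`. Since `a b = a`, this gives `a u (1 - d) ≈ a u t t* (1 - d) = 0`, and then
`y = u (1 - d)^{1/2}` satisfies `y* (1 - a) y = (1 - d) - y* a y ≈ 1 - d`.
-/

section CStarRing
variable {A : Type*} [NormedRing A] [StarRing A] [CStarRing A]

lemma norm_mul_unitary_mul_le {a b t u e : A} (hab : a * b = a) (hu : u ∈ unitary A)
    (hte : t * star t * e = 0) :
    ‖a * u * e‖ ≤ ‖a‖ * (‖star t * t - b‖ + ‖star t * t * u - u * (t * star t)‖) * ‖e‖ := by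
  have hsplit : a * u * e = a * ((b - star t * t) * u) * e
      + a * (star t * t * u - u * (t * star t)) * e := by
    have : a * u * (t * star t * e) = 0 := by rw [hte, mul_zero]
    conv_lhs => rw [← hab]
    rw [← sub_eq_zero, ← this]; noncomm_ring
  calc ‖a * u * e‖
      ≤ ‖a‖ * ‖(b - star t * t) * u‖ * ‖e‖ + ‖a‖ * ‖star t * t * u - u * (t * star t)‖ * ‖e‖ := by
        rw [hsplit]; exact (norm_add_le _ _).trans (add_le_add (norm_mul₃_le ..) (norm_mul₃_le ..))
    _ = _ := by rw [CStarRing.norm_mul_mem_unitary _ hu, norm_sub_rev]; ring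

lemma norm_star_mul_one_sub_mul_sub_sq_le {s u : A} (hs : IsSelfAdjoint s) (hu : u ∈ unitary A)
    (a : A) :
    ‖star (u * s) * (1 - a) * (u * s) - s * s‖ ^ 2 ≤ ‖s‖ ^ 2 * ‖a‖ * ‖a * u * (s * s)‖ := by
  set q := a * (u * s)
  have hdiff : star (u * s) * (1 - a) * (u * s) - s * s = -(star (u * s) * q) := by
    have : star (u * s) * (u * s) = s * s := by
      rw [star_mul, hs.star_eq, mul_assoc, ← mul_assoc (star u), Unitary.star_mul_self_of_mem hu,
        one_mul]
    rw [← this]; noncomm_ring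
  have hq : ‖q‖ ^ 2 ≤ ‖a * u * (s * s)‖ * ‖a‖ := by
    calc ‖q‖ ^ 2 = ‖a * u * (s * s) * star (a * u)‖ := by
          rw [sq, ← CStarRing.norm_self_mul_star]; simp only [q, star_mul, hs.star_eq, mul_assoc]
      _ ≤ ‖a * u * (s * s)‖ * ‖a‖ := by
          refine (norm_mul_le _ _).trans_eq ?_
          rw [star_mul, CStarRing.norm_mem_unitary_mul _ (Unitary.star_mem hu), norm_star]
  calc ‖star (u * s) * (1 - a) * (u * s) - s * s‖ ^ 2 ≤ (‖s‖ * ‖q‖) ^ 2 := by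
        rw [hdiff, norm_neg, star_mul, hs.star_eq]
        gcongr
        refine (norm_mul_le _ _).trans ?_
        rw [CStarRing.norm_mul_mem_unitary _ (Unitary.star_mem hu)]
    _ ≤ _ := by rw [mul_pow, mul_assoc, mul_comm ‖a‖]; gcongr

end CStarRing

section CStarAlgebra
variable {A : Type*} [CStarAlgebra A] [PartialOrder A] [StarOrderedRing A]

lemma CFC.sqrt_mul_eq_zero_of_mul_eq_zero {c e : A} (hc : 0 ≤ c) (hce : c * e = 0) :
    CFC.sqrt c * e = 0 := by
  rw [← CStarRing.star_mul_self_eq_zero_iff, star_mul, (CFC.sqrt_nonneg c).isSelfAdjoint.star_eq,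
    mul_assoc, ← mul_assoc (CFC.sqrt c), CFC.sqrt_mul_sqrt_self c, hce, mul_zero]

/-- `u = |z|⁻¹ z*`, the unitary of the polar decomposition `z* = |z| u`. -/
lemma exists_unitary_star_mul_self_mul_eq_mul_mul_self_star {z : A} (hz : IsUnit z) :
    ∃ u ∈ unitary A, star z * z * u = u * (z * star z) := by
  set k := CFC.sqrt (star z * z)
  have hk : IsUnit k := (CFC.isUnit_sqrt_iff _).mpr (hz.star.mul hz)
  have hkk : k * k = star z * z := CFC.sqrt_mul_sqrt_self _
  have hinv : IsSelfAdjoint (Ring.inverse k) := (CFC.sqrt_nonneg _).isSelfAdjoint.ringInverse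
  refine ⟨Ring.inverse k * star z,
    (hk.ringInverse.mul hz.star).mem_unitary_of_mul_star_self ?_, ?_⟩
  · rw [star_mul, star_star, hinv.star_eq, mul_assoc, ← mul_assoc (star z), ← hkk, ← mul_assoc,
      ← mul_assoc, Ring.inverse_mul_cancel k hk, one_mul, Ring.mul_inverse_cancel k hk]
  · calc star z * z * (Ring.inverse k * star z) = k * (k * Ring.inverse k) * star z := by
          rw [← hkk]; simp only [mul_assoc]
      _ = Ring.inverse k * k * k * star z := by
          rw [Ring.mul_inverse_cancel k hk, Ring.inverse_mul_cancel k hk, mul_one, one_mul]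
      _ = Ring.inverse k * star z * (z * star z) := by
          rw [mul_assoc _ k k, hkk]; simp only [mul_assoc]

lemma HasStableRankOne.exists_unitary_norm_star_mul_self_mul_sub_lt (hsr : HasStableRankOne A)
    (t : A) {ε : ℝ} (hε : 0 < ε) :
    ∃ u ∈ unitary A, ‖star t * t * u - u * (t * star t)‖ < ε := by
  set err : A → ℝ := fun z => ‖star t * t - star z * z‖ + ‖z * star z - t * star t‖
  have herr : Continuous err := by fun_prop
  obtain ⟨z, hz, hzt⟩ : ∃ z ∈ {z : A | IsUnit z}, err z < ε :=
    hsr.exists_mem_open (isOpen_lt herr continuous_const)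
      ⟨t, show err t < ε by simpa [err] using hε⟩
  obtain ⟨u, hu, hzu⟩ := exists_unitary_star_mul_self_mul_eq_mul_mul_self_star hz
  refine ⟨u, hu, lt_of_le_of_lt ?_ hzt⟩
  calc ‖star t * t * u - u * (t * star t)‖
      = ‖(star t * t - star z * z) * u + u * (z * star z - t * star t)‖ := by
        rw [sub_mul, mul_sub, hzu]; abel_nf
    _ ≤ err z := by
        refine (norm_add_le _ _).trans_eq ?_
        rw [CStarRing.norm_mul_mem_unitary _ hu, CStarRing.norm_mem_unitary_mul _ hu]

lemma CuntzLE.exists_tendsto_star_mul_self_of_mul_eq_zero {b c e : A} (hbc : CuntzLE b c)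
    (hc : 0 ≤ c) (hce : c * e = 0) :
    ∃ t : ℕ → A, Filter.Tendsto (fun n => ‖star (t n) * t n - b‖) Filter.atTop (nhds 0) ∧
      ∀ n, t n * star (t n) * e = 0 := by
  obtain ⟨x, hx⟩ := hbc
  have hsc : IsSelfAdjoint (CFC.sqrt c) := (CFC.sqrt_nonneg c).isSelfAdjoint
  refine ⟨fun n => CFC.sqrt c * x n, ?_, fun n => ?_⟩
  · simpa only [star_mul, hsc.star_eq, mul_assoc, ← mul_assoc (CFC.sqrt c),
      CFC.sqrt_mul_sqrt_self c] using hx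
  · simp only [star_mul, hsc.star_eq, mul_assoc, CFC.sqrt_mul_eq_zero_of_mul_eq_zero hc hce,
      mul_zero]

end CStarAlgebra

theorem stmt_0_general {A : Type*} [CStarAlgebra A] [PartialOrder A] [StarOrderedRing A]
    (hsr : HasStableRankOne A) (a d : A)
    (hd1 : d ≤ 1)
    (b c : A) (hc0 : 0 ≤ c)
    (hab : a * b = a) (hbc : CuntzLE b c) (hdc : d * c = c) :
    CuntzLE (1 - d) (1 - a) := by
  have hd : 0 ≤ 1 - d := sub_nonneg.mpr hd1
  have hce : c * (1 - d) = 0 := by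
    have : (1 - d) * c = 0 := by rw [sub_mul, one_mul, hdc, sub_self]
    simpa [hc0.isSelfAdjoint.star_eq, hd.isSelfAdjoint.star_eq] using congrArg star this
  obtain ⟨t, ht, hte⟩ := hbc.exists_tendsto_star_mul_self_of_mul_eq_zero hc0 hce
  choose u hu hut using fun n : ℕ =>
    hsr.exists_unitary_norm_star_mul_self_mul_sub_lt (t n) (Nat.one_div_pos_of_nat (n := n))
  set s := CFC.sqrt (1 - d)
  have hlim : Filter.Tendsto (fun n : ℕ => √(‖s‖ ^ 2 * ‖a‖ *
      (‖a‖ * (‖star (t n) * t n - b‖ + 1 / (n + 1)) * ‖1 - d‖))) Filter.atTop (nhds 0) := by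
    simpa using ((((ht.add tendsto_one_div_add_atTop_nhds_zero_nat).const_mul ‖a‖).mul_const
      ‖1 - d‖).const_mul (‖s‖ ^ 2 * ‖a‖)).sqrt
  refine ⟨fun n => u n * s, squeeze_zero (fun _ => norm_nonneg _) (fun n => ?_) hlim⟩
  have hsq := norm_star_mul_one_sub_mul_sub_sq_le (CFC.sqrt_nonneg (1 - d)).isSelfAdjoint (hu n) a
  rw [CFC.sqrt_mul_sqrt_self _ hd] at hsq
  refine Real.le_sqrt_of_sq_le (hsq.trans ?_)
  gcongr
  exact (norm_mul_unitary_mul_le hab (hu n) (hte n)).trans (by gcongr; exact (hut n).le)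

theorem stmt_0 {A : Type*} [CStarAlgebra A] [PartialOrder A] [StarOrderedRing A]
    (hsr : HasStableRankOne A) (a d : A)
    (ha0 : 0 ≤ a) (ha1 : a ≤ 1) (hd0 : 0 ≤ d) (hd1 : d ≤ 1)
    (b c : A) (hb0 : 0 ≤ b) (hb1 : b ≤ 1) (hc0 : 0 ≤ c) (hc1 : c ≤ 1)
    (hab : a * b = a) (hbc : CuntzLE b c) (hdc : d * c = c) :
    CuntzLE (1 - d) (1 - a) :=
  stmt_0_general hsr a d hd1 b c hc0 hab hbc hdc
end

section
/- Let A be a simple unital C*-algebra with stable rank one and let Ω be a compact metric space. For any finite set P of projections in C(Ω) there exists δ > 0 such that whenever φ, ψ : C(Ω) → A are unital *-homomorphisms with D_c(φ, ψ) < δ, the elements φ(p) and ψ(p) are Cuntz equivalent for every p ∈ P. -/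
open scoped ENNReal
open Metric Set
open scoped ComplexOrder

/-! ### Auxiliary lemmas for `stmt_2` -/

section CuntzBasics

variable {A : Type*} [CStarAlgebra A]

lemma cuntzLE_of_eq {a b : A} (x : A) (h : star x * b * x = a) : CuntzLE a b :=
  ⟨fun _ => x, by simpa [h] using tendsto_const_nhds⟩

lemma cuntzLE_refl (a : A) : CuntzLE a a := cuntzLE_of_eq 1 (by simp)

lemma norm_mul3_le (u z w : A) : ‖u * z * w‖ ≤ ‖u‖ * ‖z‖ * ‖w‖ :=
  (norm_mul_le _ w).trans
    (mul_le_mul_of_nonneg_right (norm_mul_le u z) (norm_nonneg w))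

lemma cuntzLE_sandwich {a b b' c : A} (X Y : A) (hab : star X * b * X = a)
    (hbc : CuntzLE b b') (hc : star Y * c * Y = b') : CuntzLE a c := by
  obtain ⟨x, hx⟩ := hbc
  refine ⟨fun n => Y * x n * X, ?_⟩
  have key : ∀ n, star (Y * x n * X) * c * (Y * x n * X) - a
      = star X * (star (x n) * b' * x n - b) * X := by
    intro n
    rw [← hc, ← hab]
    simp only [star_mul]
    noncomm_ring
  have hbound : ∀ n, ‖star (Y * x n * X) * c * (Y * x n * X) - a‖
      ≤ ‖X‖ * ‖star (x n) * b' * x n - b‖ * ‖X‖ := by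
    intro n
    rw [key n]
    calc ‖star X * (star (x n) * b' * x n - b) * X‖
        ≤ ‖star X‖ * ‖star (x n) * b' * x n - b‖ * ‖X‖ := norm_mul3_le _ _ _
      _ = ‖X‖ * ‖star (x n) * b' * x n - b‖ * ‖X‖ := by rw [norm_star]
  have hlim : Filter.Tendsto (fun n => ‖X‖ * ‖star (x n) * b' * x n - b‖ * ‖X‖)
      Filter.atTop (nhds 0) := by
    have := (hx.const_mul ‖X‖).mul_const ‖X‖
    simpa using this
  exact squeeze_zero (fun n => norm_nonneg _) hbound hlim

lemma proj_norm_le_one {p : A} (hp : IsSelfAdjoint p) (h2 : IsIdempotentElem p) :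
    ‖p‖ ≤ 1 := by
  have h := CStarRing.norm_star_mul_self (x := p)
  rw [hp.star_eq, h2.eq] at h
  nlinarith [norm_nonneg p]

lemma eq_zero_of_star_mul_self_eq_zero {z : A} (h : star z * z = 0) : z = 0 :=
  (CStarRing.star_mul_self_eq_zero_iff z).mp h

/-- `cfc` of a self-adjoint element commutes with anything commuting with the element. -/
lemma commute_cfc_of_commute {a b : A} (f : ℝ → ℝ) (hab : Commute a b) :
    Commute (cfc f a) b := by
  refine cfc_cases (fun z => Commute z b) a f (Commute.zero_left b) fun hf ha => ?_
  have main : ∀ g : C(spectrum ℝ a, ℝ), Commute (cfcHom ha g) b := by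
    intro g
    induction g using ContinuousMap.induction_on_of_compact with
    | const r =>
        have hconst : (ContinuousMap.const (spectrum ℝ a) r)
            = algebraMap ℝ C(spectrum ℝ a, ℝ) r := by
          ext z; simp [Algebra.algebraMap_eq_smul_one]
        rw [hconst, AlgHomClass.commutes]
        exact Algebra.commutes r b
    | id => rw [cfcHom_id ha]; exact hab
    | star_id => rw [star_trivial, cfcHom_id ha]; exact hab
    | add f₁ f₂ h₁ h₂ => rw [map_add]; exact h₁.add_left h₂
    | mul f₁ f₂ h₁ h₂ => rw [map_mul]; exact h₁.mul_left h₂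
    | frequently f hf =>
        have hcl : IsClosed {g : C(spectrum ℝ a, ℝ) | Commute (cfcHom ha g) b} := by
          have hset : {g : C(spectrum ℝ a, ℝ) | Commute (cfcHom ha g) b}
              = (fun g : C(spectrum ℝ a, ℝ) =>
                  cfcHom ha g * b - b * cfcHom ha g) ⁻¹' {0} := by
            ext g
            simp [Commute, SemiconjBy, sub_eq_zero]
          rw [hset]
          have hcont : Continuous (fun g : C(spectrum ℝ a, ℝ) =>
              cfcHom ha g * b - b * cfcHom ha g) :=
            (((cfcHom_isClosedEmbedding ha).continuous).mul continuous_const).sub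
              (continuous_const.mul (cfcHom_isClosedEmbedding ha).continuous)
          exact isClosed_singleton.preimage hcont
        have hmem : f ∈ closure {g : C(spectrum ℝ a, ℝ) | Commute (cfcHom ha g) b} :=
          mem_closure_iff_frequently.mpr hf
        rwa [hcl.closure_eq] at hmem
  exact main _

end CuntzBasics
section PartialIsometry

variable {A : Type*} [CStarAlgebra A]

set_option maxHeartbeats 2000000 in
/-- From an approximate Cuntz comparison between projections, an exact partial isometry. -/
lemma exists_pisom {p q : A} (hp₁ : IsSelfAdjoint p) (hp₂ : IsIdempotentElem p)
    (hq₁ : IsSelfAdjoint q) (hq₂ : IsIdempotentElem q) {x : A}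
    (hx : ‖star x * q * x - p‖ < 1/20) :
    ∃ v : A, star v * v = p ∧ q * (v * star v) = v * star v ∧
      (v * star v) * q = v * star v := by
  rcases subsingleton_or_nontrivial A with hsub | hnt
  · exact ⟨0, Subsingleton.elim _ _, Subsingleton.elim _ _, Subsingleton.elim _ _⟩
  have hqq : q * q = q := hq₂
  have hpp : p * p = p := hp₂
  have hpnorm : ‖p‖ ≤ 1 := proj_norm_le_one hp₁ hp₂
  have honenorm : ‖(1:A)‖ ≤ 1 := proj_norm_le_one (IsSelfAdjoint.one A) IsIdempotentElem.one
  set y := star x * q * x with hy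
  set b := q * x * p with hb
  set a := star b * b with ha
  have ha_eq : a = p * y * p := by
    simp only [ha, hb, hy, star_mul, hp₁.star_eq, hq₁.star_eq, mul_assoc]
    rw [← mul_assoc q q, hqq]
  have ha_sa : IsSelfAdjoint a := IsSelfAdjoint.star_mul_self b
  have hap : a * p = a := by rw [ha_eq, mul_assoc, hpp]
  have hpa : p * a = a := by rw [ha_eq, ← mul_assoc, ← mul_assoc, hpp]
  have ha_close : ‖a - p‖ < 1/20 := by
    have h1 : a - p = p * (y - p) * p := by
      rw [ha_eq]; simp only [mul_sub, sub_mul, hpp]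
    rw [h1]
    calc ‖p * (y - p) * p‖ ≤ ‖p‖ * ‖y - p‖ * ‖p‖ := norm_mul3_le _ _ _
      _ ≤ 1 * ‖y - p‖ * 1 := by
          gcongr <;> exact hpnorm
      _ = ‖y - p‖ := by ring
      _ < 1/20 := hx
  have ha_norm : ‖a‖ ≤ 21/20 := by
    have h3 := norm_add_le (a - p) p
    rw [sub_add_cancel] at h3
    linarith
  -- spectral gap
  have hgap : ∀ t ∈ spectrum ℝ a, t ∈ Set.Icc (0:ℝ) (1/8) ∪ Set.Icc (7/8) (21/20) := by
    intro t ht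
    have h0 : 0 ≤ t := spectrum_star_mul_self_nonneg t ht
    have h2 : t ≤ 21/20 := by
      have := spectrum.norm_le_norm_of_mem ht
      rw [Real.norm_eq_abs, abs_of_nonneg h0] at this
      linarith
    by_cases hmid : t ≤ 1/8
    · exact Or.inl ⟨h0, hmid⟩
    by_cases hmid2 : 7/8 ≤ t
    · exact Or.inr ⟨hmid2, h2⟩
    exfalso
    push_neg at hmid hmid2
    have ht0 : (0:ℝ) < t := by linarith
    have hne0 : t ≠ 0 := ne_of_gt ht0
    have hne1 : (1:ℝ) - t ≠ 0 := by intro hcon; linarith [hcon]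
    set cinv : A := ((1-t)⁻¹ + t⁻¹) • p - t⁻¹ • (1:A) with hcinv
    have key₁ : (p - algebraMap ℝ A t) * cinv = 1 := by
      simp only [hcinv, Algebra.algebraMap_eq_smul_one, mul_sub, sub_mul,
        smul_mul_assoc, mul_smul_comm, smul_smul, one_mul, mul_one, hpp]
      match_scalars <;> field_simp <;> ring
    have key₂ : cinv * (p - algebraMap ℝ A t) = 1 := by
      simp only [hcinv, Algebra.algebraMap_eq_smul_one, mul_sub, sub_mul,
        smul_mul_assoc, mul_smul_comm, smul_smul, one_mul, mul_one, hpp]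
      match_scalars <;> field_simp <;> ring
    have hunit_n : IsUnit (p - algebraMap ℝ A t) :=
      isUnit_iff_exists.mpr ⟨cinv, key₁, key₂⟩
    -- norm bound on cinv
    have hsum : (1-t)⁻¹ + t⁻¹ ≤ 64/7 := by
      have hprod : (7:ℝ)/64 ≤ t * (1-t) := by nlinarith
      have hpos : (0:ℝ) < t * (1-t) := by nlinarith
      have heq : (1-t)⁻¹ + t⁻¹ = (t * (1-t))⁻¹ := by field_simp; ring
      rw [heq]
      have h9 : (t*(1-t))⁻¹ ≤ ((7:ℝ)/64)⁻¹ := inv_anti₀ (by norm_num) hprod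
      norm_num at h9 ⊢
      linarith
    have hcinv_norm : ‖cinv‖ ≤ 120/7 := by
      have hn1 : ‖((1-t)⁻¹ + t⁻¹) • p‖ ≤ 64/7 := by
        rw [norm_smul, Real.norm_eq_abs]
        have h1t : (0:ℝ) < 1 - t := by linarith
        have hpos : (0:ℝ) < (1-t)⁻¹ + t⁻¹ := add_pos (inv_pos.mpr h1t) (inv_pos.mpr ht0)
        rw [abs_of_pos hpos]
        nlinarith [norm_nonneg p]
      have hn2 : ‖t⁻¹ • (1:A)‖ ≤ 8 := by
        rw [norm_smul, Real.norm_eq_abs, abs_of_pos (inv_pos.mpr ht0)]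
        have hinv : t⁻¹ ≤ 8 := by
          rw [inv_le_comm₀ ht0 (by norm_num)]
          linarith
        nlinarith [norm_nonneg (1:A), inv_pos.mpr ht0]
      calc ‖cinv‖ ≤ ‖((1-t)⁻¹ + t⁻¹) • p‖ + ‖t⁻¹ • (1:A)‖ := norm_sub_le _ _
        _ ≤ 120/7 := by linarith
    have honeadd : IsUnit (1 + cinv * (a - p)) := by
      have hnorm2 : ‖cinv * (a - p)‖ < 1 := by
        calc ‖cinv * (a - p)‖ ≤ ‖cinv‖ * ‖a - p‖ := norm_mul_le _ _
          _ < 1 := by nlinarith [norm_nonneg cinv, norm_nonneg (a - p)]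
      have hu := (Units.oneSub (-(cinv * (a - p))) (by rwa [norm_neg])).isUnit
      simpa [sub_neg_eq_add] using hu
    have hfactor : algebraMap ℝ A t - a
        = -((p - algebraMap ℝ A t) * (1 + cinv * (a - p))) := by
      rw [mul_add, mul_one, ← mul_assoc, key₁, one_mul]
      abel
    have hunit : IsUnit (algebraMap ℝ A t - a) := by
      rw [hfactor]; exact (hunit_n.mul honeadd).neg
    exact (spectrum.mem_iff.mp ht) hunit
  -- the functions for the functional calculus
  set h : ℝ → ℝ := fun t => min 1 (max 0 (2*t - 3/4)) with hh
  have hh_cont : Continuous h := by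
    apply Continuous.min continuous_const
    exact Continuous.max continuous_const (by fun_prop)
  have hsqrt_pos : ∀ t : ℝ, 0 < Real.sqrt (max t (7/8)) := fun t =>
    Real.sqrt_pos.mpr (lt_of_lt_of_le (by norm_num) (le_max_right t (7/8)))
  set g : ℝ → ℝ := fun t => h t / Real.sqrt (max t (7/8)) with hg
  have hg_cont : Continuous g := by
    apply hh_cont.div
    · exact Real.continuous_sqrt.comp (continuous_id.max continuous_const)
    · exact fun t => (hsqrt_pos t).ne'
  have hval : ∀ t ∈ spectrum ℝ a,
      g t * t * g t = h t ∧ h t * h t = h t ∧ |h t - t| ≤ 1/8 := by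
    intro t ht
    rcases hgap t ht with ⟨ht0, ht1⟩ | ⟨ht0, ht1⟩
    · have hht : h t = 0 := by
        simp only [hh]
        rw [max_eq_left (by linarith), min_eq_right (by norm_num)]
      refine ⟨by simp only [hg, hht]; simp, by simp [hht], ?_⟩
      rw [hht, abs_sub_comm, abs_of_nonneg (by linarith)]
      linarith
    · have hht : h t = 1 := by
        simp only [hh]
        rw [max_eq_right (by linarith), min_eq_left (by linarith)]
      have hmax : max t (7/8) = t := max_eq_left ht0
      have htpos : (0:ℝ) < t := by linarith
      have hsp : 0 < Real.sqrt t := Real.sqrt_pos.mpr htpos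
      have hss : Real.sqrt t * Real.sqrt t = t := Real.mul_self_sqrt htpos.le
      refine ⟨?_, by simp [hht], ?_⟩
      · simp only [hg, hht, hmax]
        rw [show (1:ℝ) / Real.sqrt t * t * (1 / Real.sqrt t)
            = t / (Real.sqrt t * Real.sqrt t) by ring, hss]
        exact div_self (ne_of_gt htpos)
      · rw [hht, abs_le]; constructor <;> linarith
  -- functional calculus elements
  set c := cfc g a with hc
  have hc_sa : IsSelfAdjoint c := cfc_predicate g a
  set e := cfc h a with he
  have hca : c * a * c = e := by
    have h1 := cfc_mul (fun t : ℝ => t) g a continuous_id.continuousOn hg_cont.continuousOn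
    rw [cfc_id' ℝ a ha_sa] at h1
    have h2 := cfc_mul g (fun t : ℝ => t * g t) a hg_cont.continuousOn (by fun_prop)
    rw [h1, ← mul_assoc] at h2
    rw [← h2, he]
    exact cfc_congr fun t ht => by
      have h5 := (hval t ht).1
      rw [← h5]; ring
  set v := b * c with hv
  have hvv : star v * v = e := by
    rw [hv, star_mul, hc_sa.star_eq, mul_assoc, ← mul_assoc (star b) b c, ← ha,
      ← mul_assoc, hca]
  -- e is a projection commuting with p and close to p, hence equal to p
  have he_sa : IsSelfAdjoint e := cfc_predicate h a
  have he_idem : e * e = e := by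
    rw [he, ← cfc_mul h h a hh_cont.continuousOn hh_cont.continuousOn]
    exact cfc_congr fun t ht => (hval t ht).2.1
  have he_comm : e * p = p * e := by
    have hcomm : Commute a p := by rw [Commute, SemiconjBy, hap, hpa]
    exact commute_cfc_of_commute h hcomm
  have hep_norm : ‖e - p‖ < 1 := by
    have h1 : ‖e - a‖ ≤ 1/8 := by
      have hsub := cfc_sub h (fun t : ℝ => t) a hh_cont.continuousOn
        continuous_id.continuousOn
      rw [cfc_id' ℝ a ha_sa] at hsub
      rw [he, ← hsub]
      refine norm_cfc_le (by norm_num) fun t ht => ?_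
      rw [Real.norm_eq_abs]
      exact (hval t ht).2.2
    have h2 : e - p = (e - a) + (a - p) := by abel
    have h3 : ‖e - p‖ ≤ ‖e - a‖ + ‖a - p‖ := by rw [h2]; exact norm_add_le _ _
    linarith
  have hpe : p * e = e * p := he_comm.symm
  have hd3 : (e - p) * (e - p) * (e - p) = e - p := by
    have expand1 : (e - p) * (e - p) = e - e*p - e*p + p := by
      rw [mul_sub, sub_mul, sub_mul, he_idem, hpp, hpe]; abel
    rw [expand1]
    have hepe : e * p * e = e * p := by rw [mul_assoc, hpe, ← mul_assoc, he_idem]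
    have hepp : e * p * p = e * p := by rw [mul_assoc, hpp]
    simp only [mul_sub, sub_mul, add_mul, he_idem, hpp, hepe, hepp, hpe]
    abel
  have hd_sa : IsSelfAdjoint (e - p) := he_sa.sub hp₁
  have hspec0 : ∀ t ∈ spectrum ℝ (e - p), t = 0 := by
    have hcube : cfc (fun s : ℝ => s*s*s - s) (e - p) = cfc (fun _ : ℝ => (0:ℝ)) (e - p) := by
      have h1 := cfc_mul (fun s : ℝ => s * s) (fun s : ℝ => s) (e - p)
        (by fun_prop) (by fun_prop)
      have h2 := cfc_mul (fun s : ℝ => s) (fun s : ℝ => s) (e - p) (by fun_prop) (by fun_prop)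
      have h3 := cfc_sub (fun s : ℝ => s*s*s) (fun s : ℝ => s) (e - p)
        (by fun_prop) (by fun_prop)
      rw [cfc_id' ℝ (e - p) hd_sa] at h1 h2 h3
      have h4 : (fun s : ℝ => s*s*s) = fun s : ℝ => (s*s)*s := by funext s; ring
      rw [h4] at h3
      rw [h3, h1, h2, hd3, cfc_const_zero]
      exact sub_self _
    have hEq := eqOn_of_cfc_eq_cfc (a := e - p) hcube (by fun_prop) (by fun_prop) hd_sa
    intro t ht
    have habs : |t| < 1 := by
      have := spectrum.norm_le_norm_of_mem ht
      rw [Real.norm_eq_abs] at this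
      linarith
    have h5 : t * (t * t - 1) = 0 := by
      have h6 := hEq ht
      dsimp only at h6
      linear_combination h6
    rcases mul_eq_zero.mp h5 with h7 | h7
    · exact h7
    · exfalso
      have h8 : t * t = 1 := by linarith
      have h9 : |t| * |t| < 1 := by nlinarith [abs_nonneg t]
      rw [abs_mul_abs_self, h8] at h9
      linarith
  have hep : e = p := by
    have hid0 : cfc (id : ℝ → ℝ) (e - p) = cfc (fun _ : ℝ => (0:ℝ)) (e - p) :=
      cfc_congr fun t ht => hspec0 t ht
    rw [cfc_id ℝ (e - p) hd_sa, cfc_const_zero] at hid0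
    exact sub_eq_zero.mp hid0
  refine ⟨v, by rw [hvv, hep], ?_, ?_⟩
  · have hqv : q * v = v := by
      rw [hv, hb, ← mul_assoc, ← mul_assoc, ← mul_assoc, hqq]
    rw [← mul_assoc, hqv]
  · have hqv : q * v = v := by
      rw [hv, hb, ← mul_assoc, ← mul_assoc, ← mul_assoc, hqq]
    have hvq : star v * q = star v := by
      have h8 := congrArg star hqv
      rwa [star_mul, hq₁.star_eq] at h8
    rw [mul_assoc, hvq]

end PartialIsometry
section KeyLemma

variable {A : Type*} [CStarAlgebra A]

lemma cuntzLE_of_subsingleton [Subsingleton A] (a b : A) : CuntzLE a b :=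
  cuntzLE_of_eq 0 (Subsingleton.elim _ _)

lemma proj_mul_self_right {v p : A} (hp₁ : IsSelfAdjoint p) (hpp : p * p = p)
    (hv : star v * v = p) : v * p = v := by
  have hz : star (v * p - v) * (v * p - v) = 0 := by
    have expand : star (v * p - v) * (v * p - v)
        = p * (star v * v) * p - p * (star v * v) - (star v * v) * p + star v * v := by
      simp only [star_sub, star_mul, hp₁.star_eq]
      noncomm_ring
    rw [expand, hv]
    simp only [hpp]
    abel
  exact sub_eq_zero.mp (eq_zero_of_star_mul_self_eq_zero hz)

set_option maxHeartbeats 1000000 in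
/-- In a C*-algebra of stable rank one, projections that are Cuntz subequivalent with
Cuntz subequivalent complements are Cuntz equivalent. -/
lemma cuntzEquiv_of_both {p q : A} (hsr : HasStableRankOne A)
    (hp₁ : IsSelfAdjoint p) (hp₂ : IsIdempotentElem p)
    (hq₁ : IsSelfAdjoint q) (hq₂ : IsIdempotentElem q)
    (h1 : CuntzLE p q) (h2 : CuntzLE (1 - p) (1 - q)) : CuntzEquiv p q := by
  have hp1sa : IsSelfAdjoint ((1:A) - p) := (IsSelfAdjoint.one A).sub hp₁
  have hq1sa : IsSelfAdjoint ((1:A) - q) := (IsSelfAdjoint.one A).sub hq₁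
  rcases subsingleton_or_nontrivial A with hsub | hnt
  · exact ⟨cuntzLE_of_subsingleton p q, cuntzLE_of_subsingleton q p⟩
  obtain ⟨x, hx⟩ := h1
  obtain ⟨n₁, hn₁⟩ := (hx.eventually (gt_mem_nhds (by norm_num : (0:ℝ) < 1/20))).exists
  obtain ⟨x', hx'⟩ := h2
  obtain ⟨n₂, hn₂⟩ := (hx'.eventually (gt_mem_nhds (by norm_num : (0:ℝ) < 1/20))).exists
  obtain ⟨v, hv1, hv2, hv3⟩ := exists_pisom hp₁ hp₂ hq₁ hq₂ hn₁
  obtain ⟨w, hw1, hw2, hw3⟩ := exists_pisom hp1sa hp₂.one_sub hq1sa hq₂.one_sub hn₂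
  have hpp : p * p = p := hp₂
  have hqq : q * q = q := hq₂
  have hvPv : v * p = v := proj_mul_self_right hp₁ hpp hv1
  have hwPw : w * (1 - p) = w := proj_mul_self_right hp1sa hp₂.one_sub hw1
  have hf1f2 : (v * star v) * (w * star w) = 0 := by
    calc (v * star v) * (w * star w) = ((v * star v) * q) * ((1-q) * (w * star w)) := by
          rw [hv3, hw2]
      _ = (v * star v) * (q * (1-q)) * (w * star w) := by noncomm_ring
      _ = 0 := by rw [mul_one_sub, hqq, sub_self, mul_zero, zero_mul]
  have hfv : (v * star v) * v = v := by rw [mul_assoc, hv1, hvPv]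
  have hfw : (w * star w) * w = w := by rw [mul_assoc, hw1, hwPw]
  have hsvw : star v * w = 0 := by
    have hsv : star v * (v * star v) = star v := by
      calc star v * (v * star v) = star ((v * star v) * v) := by
            rw [star_mul, star_mul, star_star]
        _ = star v := by rw [hfv]
    calc star v * w = star v * ((w * star w) * w) := by rw [hfw]
      _ = (star v * (v * star v)) * ((w * star w) * w) := by rw [hsv]
      _ = star v * ((v * star v) * (w * star w)) * w := by noncomm_ring
      _ = 0 := by rw [hf1f2, mul_zero, zero_mul]
  have hswv : star w * v = 0 := by
    have hcs := congrArg star hsvw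
    rwa [star_mul, star_star, star_zero] at hcs
  set tt := v + w with htt
  have httt : star tt * tt = 1 := by
    rw [htt, star_add, add_mul, mul_add, mul_add, hv1, hw1, hsvw, hswv]
    abel
  have htnorm : ‖tt‖ = 1 := by
    have h := CStarRing.norm_star_mul_self (x := tt)
    rw [httt, CStarRing.norm_one] at h
    have h2 : (‖tt‖ - 1) * (‖tt‖ + 1) = 0 := by linear_combination -h
    rcases mul_eq_zero.mp h2 with h3 | h3
    · linarith [sub_eq_zero.mp h3]
    · nlinarith [norm_nonneg tt]
  obtain ⟨z, hz_unit, hz_close⟩ : ∃ z, IsUnit z ∧ ‖tt - z‖ < 1 := by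
    have hmem := hsr tt
    rw [Metric.mem_closure_iff] at hmem
    obtain ⟨z, hz, hdist⟩ := hmem 1 one_pos
    exact ⟨z, hz, by rwa [dist_eq_norm] at hdist⟩
  have hu_unit : IsUnit (star tt * z) := by
    have hnorm : ‖1 - star tt * z‖ < 1 := by
      calc ‖1 - star tt * z‖ = ‖star tt * tt - star tt * z‖ := by rw [httt]
        _ = ‖star tt * (tt - z)‖ := by rw [mul_sub]
        _ ≤ ‖star tt‖ * ‖tt - z‖ := norm_mul_le _ _
        _ = ‖tt - z‖ := by rw [norm_star, htnorm, one_mul]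
        _ < 1 := hz_close
    have hiu := (Units.oneSub (1 - star tt * z) hnorm).isUnit
    rw [Units.val_oneSub, sub_sub_cancel] at hiu
    exact hiu
  have hstt_unit : IsUnit (star tt) := by
    obtain ⟨Z, hZ⟩ := hz_unit
    have h4 : star tt = (star tt * z) * ↑Z⁻¹ := by
      rw [← hZ, mul_assoc, Units.mul_inv, mul_one]
    rw [h4]
    exact hu_unit.mul (Units.isUnit _)
  have htt_unit : IsUnit tt := by
    have hst := hstt_unit.star
    rwa [star_star] at hst
  have htts : tt * star tt = 1 := by
    obtain ⟨T, hT⟩ := htt_unit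
    have h5 : star tt = ↑T⁻¹ := by
      calc star tt = star tt * (tt * ↑T⁻¹) := by rw [← hT, Units.mul_inv, mul_one]
        _ = (star tt * tt) * ↑T⁻¹ := by rw [mul_assoc]
        _ = ↑T⁻¹ := by rw [httt, one_mul]
    rw [h5, ← hT, Units.mul_inv]
  have hcross2 : v * star w = 0 := by
    calc v * star w = (v * p) * star (w * (1 - p)) := by rw [hvPv, hwPw]
      _ = v * (p * (1-p)) * star w := by rw [star_mul, hp1sa.star_eq]; noncomm_ring
      _ = 0 := by rw [mul_one_sub, hpp, sub_self, mul_zero, zero_mul]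
  have hcross2' : w * star v = 0 := by
    have hcs := congrArg star hcross2
    rwa [star_mul, star_star, star_zero] at hcs
  have hsum : v * star v + w * star w = 1 := by
    have hexp : tt * star tt = v * star v + v * star w + (w * star v + w * star w) := by
      rw [htt, star_add, add_mul, mul_add, mul_add]
    rw [hexp, hcross2, hcross2', add_zero, zero_add] at htts
    exact htts
  have hqf : v * star v = q := by
    have h6 : q * (w * star w) = 0 := by
      have h7 : q * ((1-q) * (w * star w)) = q * (w * star w) := by rw [hw2]
      rw [← mul_assoc, mul_one_sub, hqq, sub_self, zero_mul] at h7
      exact h7.symm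
    have h8 : q * (v * star v) + q * (w * star w) = q := by
      rw [← mul_add, hsum, mul_one]
    rw [hv2, h6, add_zero] at h8
    exact h8
  constructor
  · refine cuntzLE_of_eq v ?_
    rw [← hqf]
    calc star v * (v * star v) * v = (star v * v) * (star v * v) := by noncomm_ring
      _ = p := by rw [hv1, hpp]
  · refine cuntzLE_of_eq (star v) ?_
    rw [star_star, hvPv]
    exact hqf

end KeyLemma
section OmegaSide

variable {A : Type*} [CStarAlgebra A] {Ω : Type*} [MetricSpace Ω] [CompactSpace Ω]

lemma aux_inv_sqrt (r : ℝ) (hr : 0 < r) :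
    (((Real.sqrt r)⁻¹ : ℝ) : ℂ) * ((r : ℝ) : ℂ) * (((Real.sqrt r)⁻¹ : ℝ) : ℂ) = 1 := by
  norm_cast
  rw [show (Real.sqrt r)⁻¹ * r * (Real.sqrt r)⁻¹ = r / (Real.sqrt r * Real.sqrt r) by ring,
    Real.mul_self_sqrt hr.le, div_self hr.ne']

set_option maxHeartbeats 1000000 in
lemma perProj_LE (p : C(Ω, ℂ)) (hsa : IsSelfAdjoint p) (hid : IsIdempotentElem p) :
    ∃ δ : ℝ, 0 < δ ∧ ∀ φ ψ : C(Ω, ℂ) →⋆ₐ[ℂ] A,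
      Dc φ ψ < ENNReal.ofReal δ → CuntzLE (φ p) (ψ p) := by
  classical
  have hpt : ∀ t, p t = 0 ∨ p t = 1 := by
    intro t
    have hmul : p t * p t = p t := by
      have hc := ContinuousMap.congr_fun hid.eq t
      simpa [ContinuousMap.mul_apply] using hc
    have hfac : p t * (p t - 1) = 0 := by linear_combination hmul
    rcases mul_eq_zero.mp hfac with hz | hz
    · exact Or.inl hz
    · exact Or.inr (by linear_combination hz)
  by_cases hall0 : ∀ t, p t = 0
  · have hp0 : p = 0 := ContinuousMap.ext fun t => hall0 t
    exact ⟨1, one_pos, fun φ ψ _ => by rw [hp0, map_zero, map_zero]; exact cuntzLE_refl 0⟩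
  by_cases hall1 : ∀ t, p t = 1
  · have hp1 : p = 1 := ContinuousMap.ext fun t => hall1 t
    exact ⟨1, one_pos, fun φ ψ _ => by rw [hp1, map_one, map_one]; exact cuntzLE_refl 1⟩
  push_neg at hall0 hall1
  obtain ⟨t₁, ht₁⟩ := hall0
  obtain ⟨t₀, ht₀⟩ := hall1
  set O : Set Ω := {t | p t ≠ 0} with hO
  have hmem1 : ∀ t, t ∈ O ↔ p t = 1 := fun t =>
    ⟨fun ht => (hpt t).resolve_left ht, fun h => by simp [hO, h]⟩
  have hmem0 : ∀ t, t ∉ O ↔ p t = 0 := fun t => by simp [hO]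
  have hOne : O.Nonempty := ⟨t₁, ht₁⟩
  have hOcne : Oᶜ.Nonempty :=
    ⟨t₀, by rw [mem_compl_iff, hmem0]; exact (hpt t₀).resolve_right ht₀⟩
  have hO_ne_univ : O ≠ Set.univ := by
    intro hcon
    obtain ⟨t, ht⟩ := hOcne
    rw [hcon] at ht; exact ht (Set.mem_univ t)
  have hO_open : IsOpen O := isOpen_ne.preimage p.continuous
  have hO_closed : IsClosed O := by
    have hOeq : O = p ⁻¹' {(1:ℂ)} := Set.ext fun t => by
      rw [Set.mem_preimage, Set.mem_singleton_iff]; exact hmem1 t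
    rw [hOeq]
    exact isClosed_singleton.preimage p.continuous
  have hOc_closed : IsClosed Oᶜ := hO_open.isClosed_compl
  have hO_cpt : IsCompact O := hO_closed.isCompact
  set gO : Ω → ℝ := fun t => min 1 (infDist t Oᶜ) with hgO
  have hgO_cont : Continuous gO := continuous_const.min (continuous_infDist_pt _)
  have hgO_nonneg : ∀ t, 0 ≤ gO t := fun t => le_min zero_le_one infDist_nonneg
  obtain ⟨tm, htmO, htm_min⟩ := hO_cpt.exists_isMinOn hOne hgO_cont.continuousOn
  set m := gO tm with hm
  have hm_pos : 0 < m := by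
    rw [hm, hgO]
    refine lt_min one_pos ?_
    exact (hOc_closed.notMem_iff_infDist_pos hOcne).mp (notMem_compl_iff.mpr htmO)
  have hgO_ge : ∀ t ∈ O, m ≤ gO t := fun t ht => htm_min ht
  have hinf_ge : ∀ t ∈ O, m ≤ infDist t Oᶜ := fun t ht =>
    le_trans (hgO_ge t ht) (min_le_right _ _)
  have hthick : ∀ d : ℝ, 0 < d → d < m → thickening d O = O := by
    intro d hd0 hdm
    refine Set.Subset.antisymm ?_ (self_subset_thickening hd0 O)
    intro s hs
    rw [mem_thickening_iff_infDist_lt hOne] at hs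
    by_contra hsO
    obtain ⟨u, huO, hdu⟩ := (infDist_lt_iff hOne).mp hs
    have h1 : infDist u Oᶜ ≤ dist u s := infDist_le_dist_of_mem hsO
    have h2 : m ≤ infDist u Oᶜ := hinf_ge u huO
    rw [dist_comm] at h1
    linarith
  have hfO_eq : fO O = ⟨fun t => ((min 1 (infDist t Oᶜ) : ℝ) : ℂ),
      Complex.continuous_ofReal.comp
        (continuous_const.min (continuous_infDist_pt Oᶜ))⟩ := by
    unfold fO
    rw [if_neg hO_ne_univ]
  -- witnesses
  set uu : Ω → ℝ := fun t => max (gO t) m with huu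
  have huu_cont : Continuous uu := hgO_cont.max continuous_const
  have huu_pos : ∀ t, 0 < uu t := fun t => lt_of_lt_of_le hm_pos (le_max_right _ _)
  set X : C(Ω, ℂ) := p * ⟨fun t => (((Real.sqrt (uu t))⁻¹ : ℝ) : ℂ),
    Complex.continuous_ofReal.comp ((Real.continuous_sqrt.comp huu_cont).inv₀
      fun t => (Real.sqrt_pos.mpr (huu_pos t)).ne')⟩ with hX
  set Y : C(Ω, ℂ) := ⟨fun t => ((Real.sqrt (gO t) : ℝ) : ℂ),
    Complex.continuous_ofReal.comp (Real.continuous_sqrt.comp hgO_cont)⟩ with hY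
  have hXeq : star X * fO O * X = p := by
    ext t
    rw [hfO_eq]
    simp only [hX, ContinuousMap.mul_apply, ContinuousMap.star_apply,
      ContinuousMap.coe_mk, Complex.star_def, map_mul, Complex.conj_ofReal]
    rcases hpt t with h | h
    · simp [h]
    · have htO : t ∈ O := (hmem1 t).mpr h
      have hguu : uu t = gO t := max_eq_left (hgO_ge t htO)
      have hgpos : 0 < gO t := lt_of_lt_of_le hm_pos (hgO_ge t htO)
      rw [h]
      simp only [map_one, one_mul]
      have hres : (((Real.sqrt (uu t))⁻¹ : ℝ) : ℂ) * ((min 1 (infDist t Oᶜ) : ℝ) : ℂ) *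
          (((Real.sqrt (uu t))⁻¹ : ℝ) : ℂ) = 1 := by
        rw [hguu]
        exact aux_inv_sqrt (gO t) hgpos
      exact hres
  have hYeq : star Y * p * Y = fO O := by
    ext t
    rw [hfO_eq]
    simp only [hY, ContinuousMap.mul_apply, ContinuousMap.star_apply,
      ContinuousMap.coe_mk, Complex.star_def, Complex.conj_ofReal]
    rcases hpt t with h | h
    · have htO : t ∉ O := (hmem0 t).mpr h
      have hg0 : infDist t Oᶜ = 0 := infDist_zero_of_mem htO
      rw [h, hg0]
      simp
    · rw [h, mul_one]
      rw [← Complex.ofReal_mul, Real.mul_self_sqrt (hgO_nonneg t)]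
  refine ⟨m, hm_pos, fun φ ψ hDc => ?_⟩
  unfold Dc at hDc
  have hle : (⨅ (d : ℝ) (_ : 0 < d)
      (_ : CuntzLE (φ (fO O)) (ψ (fO (thickening d O)))), ENNReal.ofReal d)
      < ENNReal.ofReal m :=
    lt_of_le_of_lt (le_iSup₂ (f := fun (U : Set Ω) (_ : IsOpen U) =>
      ⨅ (d : ℝ) (_ : 0 < d)
        (_ : CuntzLE (φ (fO U)) (ψ (fO (thickening d U)))), ENNReal.ofReal d)
      O hO_open) hDc
  obtain ⟨d, hd⟩ := iInf_lt_iff.mp hle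
  obtain ⟨hd0, hd⟩ := iInf_lt_iff.mp hd
  obtain ⟨hCd, hd⟩ := iInf_lt_iff.mp hd
  have hdm : d < m := by
    rwa [ENNReal.ofReal_lt_ofReal_iff_of_nonneg hd0.le] at hd
  rw [hthick d hd0 hdm] at hCd
  exact cuntzLE_sandwich (φ X) (ψ Y)
    (by rw [← map_star, ← map_mul, ← map_mul, hXeq]) hCd
    (by rw [← map_star, ← map_mul, ← map_mul, hYeq])

lemma perProj (hsr : HasStableRankOne A) (p : C(Ω, ℂ)) (hsa : IsSelfAdjoint p)
    (hid : IsIdempotentElem p) :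
    ∃ δ : ℝ, 0 < δ ∧ ∀ φ ψ : C(Ω, ℂ) →⋆ₐ[ℂ] A,
      Dc φ ψ < ENNReal.ofReal δ → CuntzEquiv (φ p) (ψ p) := by
  obtain ⟨δ₁, hδ₁, H₁⟩ := perProj_LE (A := A) p hsa hid
  obtain ⟨δ₂, hδ₂, H₂⟩ := perProj_LE (A := A) (1 - p)
    ((IsSelfAdjoint.one C(Ω,ℂ)).sub hsa) hid.one_sub
  refine ⟨min δ₁ δ₂, lt_min hδ₁ hδ₂, fun φ ψ hDc => ?_⟩
  have h1 := H₁ φ ψ (lt_of_lt_of_le hDc (ENNReal.ofReal_le_ofReal (min_le_left _ _)))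
  have h2 := H₂ φ ψ (lt_of_lt_of_le hDc (ENNReal.ofReal_le_ofReal (min_le_right _ _)))
  rw [map_sub, map_sub, map_one, map_one] at h2
  refine cuntzEquiv_of_both hsr ?_ ?_ ?_ ?_ h1 h2
  · rw [IsSelfAdjoint, ← map_star, hsa.star_eq]
  · show φ p * φ p = φ p
    rw [← map_mul, hid.eq]
  · rw [IsSelfAdjoint, ← map_star, hsa.star_eq]
  · show ψ p * ψ p = ψ p
    rw [← map_mul, hid.eq]

end OmegaSide

theorem stmt_2 {A : Type*} [CStarAlgebra A] {Ω : Type*} [MetricSpace Ω] [CompactSpace Ω]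
    (hA : IsSimpleCStarAlgebra A) (hsr : HasStableRankOne A)
    (P : Finset C(Ω, ℂ)) (hP : ∀ p ∈ P, IsSelfAdjoint p ∧ IsIdempotentElem p) :
    ∃ δ : ℝ, 0 < δ ∧ ∀ φ ψ : C(Ω, ℂ) →⋆ₐ[ℂ] A,
      Dc φ ψ < ENNReal.ofReal δ → ∀ p ∈ P, CuntzEquiv (φ p) (ψ p) := by
  classical
  revert hP
  induction P using Finset.induction_on with
  | empty =>
      exact fun _ => ⟨1, one_pos, fun φ ψ _ p hp => absurd hp (Finset.notMem_empty p)⟩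
  | @insert a s ha ih =>
      intro hP
      obtain ⟨δ₁, hδ₁, H₁⟩ := ih (fun r hr => hP r (Finset.mem_insert_of_mem hr))
      obtain ⟨δ₂, hδ₂, H₂⟩ := perProj hsr a (hP a (Finset.mem_insert_self a s)).1
        (hP a (Finset.mem_insert_self a s)).2
      refine ⟨min δ₁ δ₂, lt_min hδ₁ hδ₂, fun φ ψ hDc r hr => ?_⟩
      rcases Finset.mem_insert.mp hr with rfl | hr'
      · exact H₂ φ ψ (lt_of_lt_of_le hDc (ENNReal.ofReal_le_ofReal (min_le_right _ _)))
      · exact H₁ φ ψ (lt_of_lt_of_le hDc (ENNReal.ofReal_le_ofReal (min_le_left _ _))) r hr'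
end

section
/- Let (G, G_+) be a countable, torsion-free, unperforated, directed partially ordered abelian group with the Riesz interpolation property. Let a_1, …, a_m and b_1, …, b_n be elements of G_+ with Σ_{i=1}^m a_i = Σ_{j=1}^n b_j, and let R ⊆ {1, …, m} × {1, …, n} be such that for every subset A ⊆ {1, …, m}, Σ_{i∈A} a_i ≤ Σ_{j∈R_A} b_j. Then there exist c_{ij} ∈ G_+ (1 ≤ i ≤ m, 1 ≤ j ≤ n) such that Σ_{j=1}^n c_{ij} = a_i for every i, Σ_{i=1}^m c_{ij} = b_j for every j, and c_{ij} = 0 unless (i, j) ∈ R. -/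
/-!
Induction on `#R`. To delete an edge `(i₀, j₀)` from `R`, route an amount `c` along it: subtract
`c` from `a i₀` and from `b j₀`. Hall's condition for the new data and the smaller relation amounts
to the lower bounds `c ≥ ∑_{A} a - ∑_{R_A} b` for `i₀ ∈ A` and the upper bounds
`c ≤ ∑_{R_B} b - ∑_{B} a` for `i₀ ∉ B`, `j₀ ∈ R_B`, together with `0 ≤ c ≤ a i₀, b j₀`.
Hall's condition for `A ∪ B` and `A ∩ B` puts every lower bound below every upper bound, so
Riesz interpolation, iterated over finite sets, yields `c`.
-/

/-- For `R ⊆ {1,…,m} × {1,…,n}` and `A ⊆ {1,…,m}`, the set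
`R_A = {j : (i,j) ∈ R for some i ∈ A}`. -/
def RA {m n : ℕ} (R : Finset (Fin m × Fin n)) (A : Finset (Fin m)) : Finset (Fin n) :=
  (R.filter (fun p => p.1 ∈ A)).image Prod.snd

open Finset

def HasRieszInterpolation (G : Type*) [Preorder G] : Prop :=
  ∀ a₁ a₂ b₁ b₂ : G, a₁ ≤ b₁ → a₁ ≤ b₂ → a₂ ≤ b₁ → a₂ ≤ b₂ →
    ∃ c : G, a₁ ≤ c ∧ a₂ ≤ c ∧ c ≤ b₁ ∧ c ≤ b₂

namespace HasRieszInterpolation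

variable {G : Type*} [Preorder G]

theorem exists_between_pair (hG : HasRieszInterpolation G) {x₁ x₂ : G} {t : Finset G}
    (ht : t.Nonempty) (h₁ : ∀ y ∈ t, x₁ ≤ y) (h₂ : ∀ y ∈ t, x₂ ≤ y) :
    ∃ c, x₁ ≤ c ∧ x₂ ≤ c ∧ ∀ y ∈ t, c ≤ y := by
  induction ht using Finset.Nonempty.cons_induction with
  | singleton y =>
    obtain ⟨c, hx₁c, hx₂c, hcy, -⟩ := hG x₁ x₂ y y (h₁ y (mem_singleton_self y))
      (h₁ y (mem_singleton_self y)) (h₂ y (mem_singleton_self y)) (h₂ y (mem_singleton_self y))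
    exact ⟨c, hx₁c, hx₂c, by simpa using hcy⟩
  | cons y t hy ht ih =>
    simp only [mem_cons, forall_eq_or_imp] at h₁ h₂ ⊢
    obtain ⟨c', hx₁c', hx₂c', hc't⟩ := ih h₁.2 h₂.2
    obtain ⟨c, hx₁c, hx₂c, hcy, hcc'⟩ := hG x₁ x₂ y c' h₁.1 hx₁c' h₂.1 hx₂c'
    exact ⟨c, hx₁c, hx₂c, hcy, fun z hz => hcc'.trans (hc't z hz)⟩

theorem exists_between (hG : HasRieszInterpolation G) {s t : Finset G} (hs : s.Nonempty)
    (ht : t.Nonempty) (hst : ∀ x ∈ s, ∀ y ∈ t, x ≤ y) :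
    ∃ c, (∀ x ∈ s, x ≤ c) ∧ ∀ y ∈ t, c ≤ y := by
  induction hs using Finset.Nonempty.cons_induction with
  | singleton x =>
    obtain ⟨c, hxc, -, hct⟩ :=
      hG.exists_between_pair ht (hst x (mem_singleton_self x)) (hst x (mem_singleton_self x))
    exact ⟨c, by simpa using hxc, hct⟩
  | cons x s hx hs ih =>
    simp only [mem_cons, forall_eq_or_imp] at hst ⊢
    obtain ⟨c', hsc', hc't⟩ := ih hst.2
    obtain ⟨c, hxc, hc'c, hct⟩ := hG.exists_between_pair ht hst.1 hc't
    exact ⟨c, ⟨hxc, fun z hz => (hsc' z hz).trans hc'c⟩, hct⟩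

end HasRieszInterpolation

section RA

variable {m n : ℕ} {R : Finset (Fin m × Fin n)} {A B : Finset (Fin m)}

theorem mem_RA {j : Fin n} : j ∈ RA R A ↔ ∃ i ∈ A, (i, j) ∈ R := by
  simp [RA, and_comm]

theorem RA_mono (h : A ⊆ B) : RA R A ⊆ RA R B := by
  intro j
  simp only [mem_RA]
  exact fun ⟨i, hi, hij⟩ => ⟨i, h hi, hij⟩

theorem RA_union : RA R (A ∪ B) = RA R A ∪ RA R B := by
  ext j
  simp only [mem_union, mem_RA, or_and_right, exists_or]

theorem RA_inter_subset : RA R (A ∩ B) ⊆ RA R A ∩ RA R B :=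
  subset_inter (RA_mono inter_subset_left) (RA_mono inter_subset_right)

@[simp]
theorem RA_empty_left : RA (∅ : Finset (Fin m × Fin n)) A = ∅ := by
  simp [RA]

theorem RA_insert_of_mem {i₀ : Fin m} (j₀ : Fin n) (h : i₀ ∈ A) :
    RA (insert (i₀, j₀) R) A = insert j₀ (RA R A) := by
  ext j
  simp only [mem_insert, mem_RA, Prod.ext_iff]
  constructor
  · rintro ⟨i, hi, ⟨rfl, rfl⟩ | hij⟩
    exacts [Or.inl rfl, Or.inr ⟨i, hi, hij⟩]
  · rintro (rfl | ⟨i, hi, hij⟩)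
    exacts [⟨i₀, h, Or.inl ⟨rfl, rfl⟩⟩, ⟨i, hi, Or.inr hij⟩]

theorem RA_insert_of_notMem {i₀ : Fin m} (j₀ : Fin n) (h : i₀ ∉ A) :
    RA (insert (i₀, j₀) R) A = RA R A := by
  ext j
  simp only [mem_insert, mem_RA, Prod.ext_iff]
  refine exists_congr fun i => and_congr_right fun hi => ?_
  have : i ≠ i₀ := ne_of_mem_of_not_mem hi h
  simp [this]

end RA

section AddCommMonoid

variable {G : Type*} [AddCommMonoid G] [PartialOrder G] {m n : ℕ}

def HallCondition (R : Finset (Fin m × Fin n)) (a : Fin m → G) (b : Fin n → G) : Prop :=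
  ∀ A, ∑ i ∈ A, a i ≤ ∑ j ∈ RA R A, b j

def IsTransportPlan (R : Finset (Fin m × Fin n)) (a : Fin m → G) (b : Fin n → G)
    (c : Fin m → Fin n → G) : Prop :=
  (∀ i j, 0 ≤ c i j) ∧ (∀ i, ∑ j, c i j = a i) ∧ (∀ j, ∑ i, c i j = b j) ∧
    ∀ i j, (i, j) ∉ R → c i j = 0

theorem isTransportPlan_zero (R : Finset (Fin m × Fin n)) :
    IsTransportPlan R (0 : Fin m → G) 0 0 :=
  ⟨fun _ _ => le_rfl, by simp, by simp, fun _ _ _ => rfl⟩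

namespace HallCondition

variable {R : Finset (Fin m × Fin n)} {a : Fin m → G} {b : Fin n → G}

theorem eq_zero_of_empty
    (hR : HallCondition (∅ : Finset (Fin m × Fin n)) a b) (ha : ∀ i, 0 ≤ a i) : a = 0 := by
  ext i
  exact le_antisymm (by simpa using hR {i}) (ha i)

theorem sum_le_of_notMem {i₀ : Fin m} {j₀ : Fin n} (hR : HallCondition (insert (i₀, j₀) R) a b)
    {A : Finset (Fin m)} (hA : i₀ ∉ A) : ∑ i ∈ A, a i ≤ ∑ j ∈ RA R A, b j := by
  simpa only [RA_insert_of_notMem j₀ hA] using hR A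

end HallCondition

end AddCommMonoid

section Matrix

variable {ι κ α : Type*} [DecidableEq ι] [DecidableEq κ] [AddCommMonoid α]

theorem Matrix.row_sum_single [Fintype κ] (i₀ i : ι) (j₀ : κ) (c : α) :
    ∑ j, Matrix.single i₀ j₀ c i j = (Pi.single i₀ c : ι → α) i := by
  rcases eq_or_ne i i₀ with rfl | hi <;> simp [Matrix.single_apply, *, Ne.symm]

theorem Matrix.col_sum_single [Fintype ι] (i₀ : ι) (j₀ j : κ) (c : α) :
    ∑ i, Matrix.single i₀ j₀ c i j = (Pi.single j₀ c : κ → α) j := by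
  rcases eq_or_ne j j₀ with rfl | hj <;> simp [Matrix.single_apply, *, Ne.symm]

end Matrix

section OrderedAddCommGroup

variable {G : Type*} [AddCommGroup G] [PartialOrder G] [IsOrderedAddMonoid G] {m n : ℕ}
  {R : Finset (Fin m × Fin n)} {a : Fin m → G} {b : Fin n → G} {i₀ : Fin m} {j₀ : Fin n}

theorem Pi.sub_single_nonneg {ι : Type*} [DecidableEq ι] {f : ι → G} {i₀ : ι} {c : G}
    (hf : ∀ i, 0 ≤ f i) (hc : c ≤ f i₀) (i : ι) : 0 ≤ (f - Pi.single i₀ c : ι → G) i := by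
  rcases eq_or_ne i i₀ with rfl | hi
  · simpa using hc
  · simpa [hi] using hf i

namespace HallCondition

theorem deficiency_le_left (hR : HallCondition (insert (i₀, j₀) R) a b) (hb : ∀ j, 0 ≤ b j)
    {A : Finset (Fin m)} (hA : i₀ ∈ A) : ∑ i ∈ A, a i - ∑ j ∈ RA R A, b j ≤ a i₀ := by
  have hA' : ∑ i ∈ A.erase i₀, a i ≤ ∑ j ∈ RA R A, b j :=
    (hR.sum_le_of_notMem (notMem_erase i₀ A)).trans
      (sum_le_sum_of_subset_of_nonneg (RA_mono (erase_subset i₀ A)) fun j _ _ => hb j)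
  rw [← add_sum_erase A a hA, sub_le_iff_le_add]
  exact add_le_add le_rfl hA'

theorem deficiency_le_right (hR : HallCondition (insert (i₀, j₀) R) a b) (hb : ∀ j, 0 ≤ b j)
    {A : Finset (Fin m)} (hA : i₀ ∈ A) : ∑ i ∈ A, a i - ∑ j ∈ RA R A, b j ≤ b j₀ := by
  have h := hR A
  rw [RA_insert_of_mem j₀ hA] at h
  rw [sub_le_iff_le_add']
  by_cases hj : j₀ ∈ RA R A
  · rw [insert_eq_of_mem hj] at h
    exact h.trans (le_add_of_nonneg_right (hb j₀))
  · rwa [sum_insert hj, add_comm] at h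

theorem deficiency_le_surplus (hR : HallCondition (insert (i₀, j₀) R) a b) (hb : ∀ j, 0 ≤ b j)
    {A B : Finset (Fin m)} (hA : i₀ ∈ A) (hB : i₀ ∉ B) (hjB : j₀ ∈ RA R B) :
    ∑ i ∈ A, a i - ∑ j ∈ RA R A, b j ≤ ∑ j ∈ RA R B, b j - ∑ i ∈ B, a i := by
  classical
  have hunion : ∑ i ∈ A ∪ B, a i ≤ ∑ j ∈ RA R A ∪ RA R B, b j := by
    have h := hR (A ∪ B)
    rwa [RA_insert_of_mem j₀ (mem_union_left B hA), RA_union,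
      insert_eq_of_mem (mem_union_right _ hjB)] at h
  have hinter : ∑ i ∈ A ∩ B, a i ≤ ∑ j ∈ RA R A ∩ RA R B, b j :=
    (hR.sum_le_of_notMem fun h => hB (mem_inter.1 h).2).trans
      (sum_le_sum_of_subset_of_nonneg RA_inter_subset fun j _ _ => hb j)
  rw [sub_le_sub_iff, add_comm (∑ j ∈ RA R B, b j)]
  calc ∑ i ∈ A, a i + ∑ i ∈ B, a i = ∑ i ∈ A ∪ B, a i + ∑ i ∈ A ∩ B, a i := sum_union_inter.symm
    _ ≤ ∑ j ∈ RA R A ∪ RA R B, b j + ∑ j ∈ RA R A ∩ RA R B, b j := add_le_add hunion hinter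
    _ = ∑ j ∈ RA R A, b j + ∑ j ∈ RA R B, b j := sum_union_inter

theorem surplus_nonneg (hR : HallCondition (insert (i₀, j₀) R) a b) {B : Finset (Fin m)}
    (hB : i₀ ∉ B) : 0 ≤ ∑ j ∈ RA R B, b j - ∑ i ∈ B, a i :=
  sub_nonneg.2 (hR.sum_le_of_notMem hB)

theorem sub_single (hR : HallCondition (insert (i₀, j₀) R) a b) {c : G}
    (hlow : ∀ A, i₀ ∈ A → ∑ i ∈ A, a i - ∑ j ∈ RA R A, b j ≤ c)
    (hup : ∀ B, i₀ ∉ B → j₀ ∈ RA R B → c ≤ ∑ j ∈ RA R B, b j - ∑ i ∈ B, a i) :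
    HallCondition R (a - Pi.single i₀ c) (b - Pi.single j₀ c) := by
  intro A
  simp only [Pi.sub_apply, sum_sub_distrib, sum_pi_single']
  by_cases hA : i₀ ∈ A <;> by_cases hj : j₀ ∈ RA R A <;>
    simp only [hA, hj, if_true, if_false, sub_zero]
  · have h := hR A
    rw [RA_insert_of_mem j₀ hA, insert_eq_of_mem hj] at h
    exact sub_le_sub_right h c
  · exact sub_le_comm.1 (hlow A hA)
  · exact le_sub_comm.1 (hup A hA hj)
  · exact hR.sum_le_of_notMem hA

theorem exists_sub_single (hR : HallCondition (insert (i₀, j₀) R) a b)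
    (hG : HasRieszInterpolation G) (ha : ∀ i, 0 ≤ a i) (hb : ∀ j, 0 ≤ b j) :
    ∃ c, 0 ≤ c ∧ c ≤ a i₀ ∧ c ≤ b j₀ ∧
      HallCondition R (a - Pi.single i₀ c) (b - Pi.single j₀ c) := by
  classical
  obtain ⟨c, hlow, hup⟩ := hG.exists_between
    (s := insert 0 ((univ.filter (i₀ ∈ ·)).image fun A => ∑ i ∈ A, a i - ∑ j ∈ RA R A, b j))
    (t := insert (a i₀) (insert (b j₀) ((univ.filter fun B => i₀ ∉ B ∧ j₀ ∈ RA R B).image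
      fun B => ∑ j ∈ RA R B, b j - ∑ i ∈ B, a i)))
    (insert_nonempty _ _) (insert_nonempty _ _) (by
      simp only [forall_mem_insert, forall_mem_image, mem_filter, mem_univ, true_and]
      exact ⟨⟨ha i₀, hb j₀, fun B hB => hR.surplus_nonneg hB.1⟩, fun A hA =>
        ⟨hR.deficiency_le_left hb hA, hR.deficiency_le_right hb hA,
          fun B hB => hR.deficiency_le_surplus hb hA hB.1 hB.2⟩⟩)
  simp only [forall_mem_insert, forall_mem_image, mem_filter, mem_univ, true_and] at hlow hup
  exact ⟨c, hlow.1, hup.1, hup.2.1,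
    hR.sub_single (fun A hA => hlow.2 hA) fun B hB hjB => hup.2.2 ⟨hB, hjB⟩⟩

end HallCondition

theorem IsTransportPlan.add_single {c : G} {t : Fin m → Fin n → G}
    (ht : IsTransportPlan R (a - Pi.single i₀ c) (b - Pi.single j₀ c) t) (hc : 0 ≤ c) :
    IsTransportPlan (insert (i₀, j₀) R) a b fun i j => t i j + Matrix.single i₀ j₀ c i j := by
  obtain ⟨hnonneg, hrow, hcol, hsupp⟩ := ht
  refine ⟨fun i j => add_nonneg (hnonneg i j) ?_, fun i => ?_, fun j => ?_, fun i j hij => ?_⟩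
  · rw [Matrix.single_apply]
    split_ifs
    exacts [hc, le_rfl]
  · rw [sum_add_distrib, hrow, Matrix.row_sum_single, Pi.sub_apply, sub_add_cancel]
  · rw [sum_add_distrib, hcol, Matrix.col_sum_single, Pi.sub_apply, sub_add_cancel]
  · rw [mem_insert, not_or, Prod.ext_iff] at hij
    dsimp only
    rw [hsupp i j hij.2, Matrix.single_apply_of_ne i₀ j₀ c i j fun h => hij.1 ⟨h.1.symm, h.2.symm⟩,
      add_zero]

theorem exists_isTransportPlan (hG : HasRieszInterpolation G) (ha : ∀ i, 0 ≤ a i)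
    (hb : ∀ j, 0 ≤ b j) (hsum : ∑ i, a i = ∑ j, b j) (hR : HallCondition R a b) :
    ∃ c, IsTransportPlan R a b c := by
  induction R using Finset.induction_on generalizing a b with
  | empty =>
    obtain rfl := hR.eq_zero_of_empty ha
    have hb0 : ∀ j ∈ univ, b j = 0 :=
      (sum_eq_zero_iff_of_nonneg fun j _ => hb j).1 (by simpa using hsum.symm)
    obtain rfl : b = 0 := funext fun j => hb0 j (mem_univ j)
    exact ⟨0, isTransportPlan_zero ∅⟩
  | insert p R _ ih =>
    obtain ⟨i₀, j₀⟩ := p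
    obtain ⟨c, hc, hca, hcb, hR'⟩ := hR.exists_sub_single hG ha hb
    obtain ⟨t, ht⟩ := ih (Pi.sub_single_nonneg ha hca) (Pi.sub_single_nonneg hb hcb)
      (by simp [sum_sub_distrib, hsum]) hR'
    exact ⟨_, ht.add_single hc⟩

end OrderedAddCommGroup

theorem stmt_10_general {G : Type*} [AddCommGroup G] [PartialOrder G] [IsOrderedAddMonoid G]
    (hriesz : ∀ a₁ a₂ b₁ b₂ : G, a₁ ≤ b₁ → a₁ ≤ b₂ → a₂ ≤ b₁ → a₂ ≤ b₂ →
      ∃ c : G, a₁ ≤ c ∧ a₂ ≤ c ∧ c ≤ b₁ ∧ c ≤ b₂)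
    {m n : ℕ} (a : Fin m → G) (b : Fin n → G)
    (ha : ∀ i, 0 ≤ a i) (hb : ∀ j, 0 ≤ b j)
    (hsum : ∑ i, a i = ∑ j, b j)
    (R : Finset (Fin m × Fin n))
    (hR : ∀ A : Finset (Fin m), ∑ i ∈ A, a i ≤ ∑ j ∈ RA R A, b j) :
    ∃ c : Fin m → Fin n → G,
      (∀ i j, 0 ≤ c i j) ∧
      (∀ i, ∑ j, c i j = a i) ∧
      (∀ j, ∑ i, c i j = b j) ∧
      (∀ i j, (i, j) ∉ R → c i j = 0) :=
  exists_isTransportPlan hriesz ha hb hsum hR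

theorem stmt_10 {G : Type*} [AddCommGroup G] [PartialOrder G] [IsOrderedAddMonoid G] [Countable G]
    (htorsionfree : ∀ (g : G) (N : ℕ), 0 < N → N • g = 0 → g = 0)
    (hdirected : ∀ g : G, ∃ a b : G, 0 ≤ a ∧ 0 ≤ b ∧ g = a - b)
    (hunperf : ∀ (g : G) (N : ℕ), 0 < N → 0 ≤ N • g → 0 ≤ g)
    (hriesz : ∀ a₁ a₂ b₁ b₂ : G, a₁ ≤ b₁ → a₁ ≤ b₂ → a₂ ≤ b₁ → a₂ ≤ b₂ →
      ∃ c : G, a₁ ≤ c ∧ a₂ ≤ c ∧ c ≤ b₁ ∧ c ≤ b₂)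
    {m n : ℕ} (a : Fin m → G) (b : Fin n → G)
    (ha : ∀ i, 0 ≤ a i) (hb : ∀ j, 0 ≤ b j)
    (hsum : ∑ i, a i = ∑ j, b j)
    (R : Finset (Fin m × Fin n))
    (hR : ∀ A : Finset (Fin m), ∑ i ∈ A, a i ≤ ∑ j ∈ RA R A, b j) :
    ∃ c : Fin m → Fin n → G,
      (∀ i j, 0 ≤ c i j) ∧
      (∀ i, ∑ j, c i j = a i) ∧
      (∀ j, ∑ i, c i j = b j) ∧
      (∀ i j, (i, j) ∉ R → c i j = 0) :=
  stmt_10_general hriesz a b ha hb hsum R hR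
end

section
/- Let A be a unital simple C*-algebra with T(A) ≠ ∅, let X be a compact metric space, and let φ : C(X) → A be a unital injective *-homomorphism. Then there is an increasing function Δ : (0, 1) → (0, 1) with lim_{r→0} Δ(r) = 0 such that μ_{τ∘φ}(O) ≥ Δ(r) for every τ ∈ T(A) and every open metric ball O ⊆ X of radius r ∈ (0, 1). -/
open scoped ENNReal
open Metric Set
open scoped ComplexOrder

/-!
In a simple C*-algebra the closed ideal generated by a nonzero positive `b` is everything, so `1`
lies within `1/2` of some `a = ∑ xᵢ b yᵢ`. Then `1 ≤ a + a* ≤ ∑ (xᵢ b xᵢ* + yᵢ* b yᵢ)`, and taking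
traces gives `1 ≤ (∑ ‖xᵢ‖² + ‖yᵢ‖²) τ(b)` for every tracial state `τ`: a lower bound on `τ(b)`
that does not depend on `τ`. Applying this to `φ` of tent functions centred at the points of a
finite `s/2`-net of `X` bounds `μ_{τ∘φ}(B(c, s))` from below uniformly in `τ` and `c`, and
`Δ(r) = min(r, inf_{τ, c} μ_{τ∘φ}(B(c, r)))` is then the required function.
-/

open MeasureTheory Filter Topology

namespace TwoSidedIdeal

variable {R : Type*} [Ring R]

lemma exists_sum_mul_mul_of_mem_span_singleton {a b : R} (ha : a ∈ span {b}) :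
    ∃ (n : ℕ) (x y : Fin n → R), a = ∑ i, x i * b * y i := by
  rw [mem_span_iff_mem_addSubgroup_closure] at ha
  induction ha using AddSubgroup.closure_induction with
  | mem g hg =>
    obtain ⟨_, ⟨x, -, _, rfl, rfl⟩, y, -, rfl⟩ := hg
    exact ⟨1, ![x], ![y], by simp⟩
  | zero => exact ⟨0, ![], ![], by simp⟩
  | add _ _ _ _ h₁ h₂ =>
    obtain ⟨n, x, y, rfl⟩ := h₁
    obtain ⟨m, x', y', rfl⟩ := h₂
    exact ⟨n + m, Fin.append x x', Fin.append y y', by simp [Fin.sum_univ_add]⟩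
  | neg _ _ h =>
    obtain ⟨n, x, y, rfl⟩ := h
    exact ⟨n, -x, y, by simp [Finset.sum_neg_distrib]⟩

variable [TopologicalSpace R] [IsTopologicalRing R]

def closure (I : TwoSidedIdeal R) : TwoSidedIdeal R :=
  .mk' (_root_.closure I) (subset_closure I.zero_mem)
    (fun hx hy => map_mem_closure₂ continuous_add hx hy fun _ ha _ hb => I.add_mem ha hb)
    (fun hx => map_mem_closure continuous_neg hx fun _ ha => I.neg_mem ha)
    (fun {x _} hy => map_mem_closure (f := (x * ·)) (continuous_const_mul x) hy
      fun a ha => I.mul_mem_left x a ha)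
    (fun {_ y} hx => map_mem_closure (f := (· * y)) (continuous_mul_const y) hx
      fun a ha => I.mul_mem_right a y ha)

lemma coe_closure (I : TwoSidedIdeal R) : (I.closure : Set R) = _root_.closure I :=
  coe_mk' _ _ _ _ _ _

end TwoSidedIdeal

section CStarAlgebra

variable {A : Type*} [CStarAlgebra A]

lemma IsSimpleCStarAlgebra.one_mem_closure_span_singleton (hA : IsSimpleCStarAlgebra A)
    {b : A} (hb : b ≠ 0) : (1 : A) ∈ closure (TwoSidedIdeal.span {b} : Set A) := by
  set I := (TwoSidedIdeal.span {b}).closure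
  have hI : (I : Set A) = closure (TwoSidedIdeal.span {b} : Set A) :=
    TwoSidedIdeal.coe_closure _
  rw [← hI]
  obtain h | h := hA I (hI ▸ isClosed_closure)
  · have : b ∈ (I : Set A) := hI ▸ subset_closure (TwoSidedIdeal.subset_span rfl)
    simp [h, hb] at this
  · simp [h]

section StarOrderedRing

variable [PartialOrder A] [StarOrderedRing A]

lemma one_le_add_star_of_norm_sub_le {a : A} (ha : ‖1 - a‖ ≤ 1 / 2) : 1 ≤ a + star a := by
  set e := 1 - a
  have he : e + star e ≤ 1 := by
    have hnorm : ‖e + star e‖ ≤ 1 := by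
      calc ‖e + star e‖ ≤ ‖e‖ + ‖star e‖ := norm_add_le _ _
        _ ≤ 1 := by rw [norm_star]; linarith
    calc e + star e ≤ algebraMap ℝ A ‖e + star e‖ :=
          (IsSelfAdjoint.add_star_self e).le_algebraMap_norm_self
      _ ≤ algebraMap ℝ A 1 := algebraMap_mono A hnorm
      _ = 1 := map_one _
  have : a + star a = 2 - (e + star e) := by
    simp only [e, star_sub, star_one, ← one_add_one_eq_two]; abel
  rw [this]
  calc (1 : A) = 2 - 1 := by norm_num
    _ ≤ 2 - (e + star e) := sub_le_sub_left he 2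

lemma mul_mul_add_star_le {b : A} (hb : 0 ≤ b) (x y : A) :
    x * b * y + star (x * b * y) ≤ x * b * star x + star y * b * y := by
  obtain ⟨z, rfl⟩ := CStarAlgebra.nonneg_iff_eq_star_mul_self.mp hb
  have := star_mul_self_nonneg (z * star x - z * y)
  rw [← sub_nonneg]
  convert this using 1
  simp only [star_mul, star_sub, star_star]
  noncomm_ring

namespace IsTracialState

variable {τ : A →ₗ[ℂ] ℂ}

lemma re_nonneg (hτ : IsTracialState τ) {a : A} (ha : 0 ≤ a) : 0 ≤ (τ a).re := by
  obtain ⟨x, rfl⟩ := CStarAlgebra.nonneg_iff_eq_star_mul_self.mp ha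
  exact (Complex.le_def.mp (hτ.nonneg x)).1

lemma re_mono (hτ : IsTracialState τ) {a b : A} (hab : a ≤ b) : (τ a).re ≤ (τ b).re := by
  have := hτ.re_nonneg (sub_nonneg.mpr hab)
  rwa [map_sub, Complex.sub_re, sub_nonneg] at this

lemma re_mul_mul_star_le (hτ : IsTracialState τ) {b : A} (hb : 0 ≤ b) (x : A) :
    (τ (x * b * star x)).re ≤ ‖x‖ ^ 2 * (τ b).re := by
  obtain ⟨z, rfl⟩ := CStarAlgebra.nonneg_iff_eq_star_mul_self.mp hb
  have hcycle : τ (x * (star z * z) * star x) = τ (z * (star x * x) * star z) := by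
    rw [show x * (star z * z) * star x = (x * star z) * (z * star x) by noncomm_ring, hτ.tracial]
    noncomm_ring
  have hswap : τ (z * star z) = τ (star z * z) := hτ.tracial _ _
  calc (τ (x * (star z * z) * star x)).re = (τ (z * (star x * x) * star z)).re := by rw [hcycle]
    _ ≤ (τ (‖star x * x‖ • (z * star z))).re :=
      hτ.re_mono CStarAlgebra.star_right_conjugate_le_norm_smul
    _ = ‖x‖ ^ 2 * (τ (star z * z)).re := by
      rw [CStarRing.norm_star_mul_self, ← pow_two, ← hswap, ← Complex.coe_smul, map_smul,
        smul_eq_mul, Complex.re_ofReal_mul]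

lemma re_sum_add_star_le (hτ : IsTracialState τ) {b : A} (hb : 0 ≤ b) {n : ℕ}
    (x y : Fin n → A) :
    (τ ((∑ i, x i * b * y i) + star (∑ i, x i * b * y i))).re ≤
      (∑ i, (‖x i‖ ^ 2 + ‖y i‖ ^ 2)) * (τ b).re := by
  have hle : (∑ i, x i * b * y i) + star (∑ i, x i * b * y i) ≤
      ∑ i, (x i * b * star (x i) + star (y i) * b * y i) := by
    rw [star_sum, ← Finset.sum_add_distrib]
    exact Finset.sum_le_sum fun i _ => mul_mul_add_star_le hb (x i) (y i)
  refine (hτ.re_mono hle).trans ?_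
  rw [map_sum, Complex.re_sum, Finset.sum_mul]
  refine Finset.sum_le_sum fun i _ => ?_
  rw [map_add, Complex.add_re, add_mul]
  have hy := hτ.re_mul_mul_star_le hb (star (y i))
  rw [star_star, norm_star] at hy
  exact add_le_add (hτ.re_mul_mul_star_le hb (x i)) hy

end IsTracialState

lemma IsSimpleCStarAlgebra.exists_pos_le_re_trace (hA : IsSimpleCStarAlgebra A) {b : A}
    (hb : 0 ≤ b) (hb0 : b ≠ 0) :
    ∃ K > 0, ∀ τ : A →ₗ[ℂ] ℂ, IsTracialState τ → K ≤ (τ b).re := by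
  obtain ⟨a, ha, hdist⟩ :=
    Metric.mem_closure_iff.mp (hA.one_mem_closure_span_singleton hb0) (1 / 2) (by norm_num)
  obtain ⟨n, x, y, rfl⟩ := TwoSidedIdeal.exists_sum_mul_mul_of_mem_span_singleton ha
  set M := ∑ i, (‖x i‖ ^ 2 + ‖y i‖ ^ 2)
  refine ⟨1 / (M + 1), by positivity, fun τ hτ => ?_⟩
  have hone := hτ.re_mono (one_le_add_star_of_norm_sub_le (dist_eq_norm (1 : A) _ ▸ hdist.le))
  rw [hτ.map_one, Complex.one_re] at hone
  have := hone.trans (hτ.re_sum_add_star_le hb x y)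
  rw [div_le_iff₀ (by positivity)]
  nlinarith [hτ.re_nonneg hb]

end StarOrderedRing

variable {X : Type*}

lemma exists_pos_le_integral_norm_sq [TopologicalSpace X] [MeasurableSpace X]
    (hA : IsSimpleCStarAlgebra A) {φ : C(X, ℂ) →⋆ₐ[ℂ] A} (hφ : Function.Injective φ)
    {h : C(X, ℂ)} (hh : h ≠ 0) :
    ∃ K > 0, ∀ τ : A →ₗ[ℂ] ℂ, IsTracialState τ → ∀ μ : Measure X,
      (∀ f : C(X, ℂ), τ (φ f) = ∫ t, f t ∂μ) → K ≤ ∫ t, ‖h t‖ ^ 2 ∂μ := by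
  let _ : PartialOrder A := CStarAlgebra.spectralOrder A
  have _ : StarOrderedRing A := CStarAlgebra.spectralOrderedRing A
  have hφh : φ h ≠ 0 := (map_ne_zero_iff φ hφ).mpr hh
  obtain ⟨K, hK, hKle⟩ := hA.exists_pos_le_re_trace (star_mul_self_nonneg (φ h))
    ((CStarRing.star_mul_self_ne_zero_iff _).mpr hφh)
  refine ⟨K, hK, fun τ hτ μ hμ => (hKle τ hτ).trans_eq ?_⟩
  rw [← map_star, ← map_mul, hμ]
  simp only [ContinuousMap.mul_apply, ContinuousMap.star_apply, RCLike.star_def,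
    Complex.conj_mul', ← Complex.ofReal_pow, integral_complex_ofReal, Complex.ofReal_re]

lemma exists_pos_le_measure_ball [MetricSpace X] [CompactSpace X] [MeasurableSpace X]
    (hA : IsSimpleCStarAlgebra A) {φ : C(X, ℂ) →⋆ₐ[ℂ] A} (hφ : Function.Injective φ)
    {s : ℝ} (hs : 0 < s) :
    ∃ K > 0, ∀ τ : A →ₗ[ℂ] ℂ, IsTracialState τ → ∀ μ : Measure X,
      (∀ f : C(X, ℂ), τ (φ f) = ∫ t, f t ∂μ) → ∀ c : X, ENNReal.ofReal K ≤ μ (ball c s) := by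
  set ρ := s / 2 with hρs
  have hρ : 0 < ρ := half_pos hs
  let tent : X → C(X, ℂ) := fun i => ⟨fun x => ((max 0 (1 - dist x i / ρ) : ℝ) : ℂ), by fun_prop⟩
  have tent_norm (i x : X) : ‖tent i x‖ = max 0 (1 - dist x i / ρ) := by
    simp [tent, Complex.norm_real, Real.norm_eq_abs, abs_of_nonneg]
  have tent_ne (i : X) : tent i ≠ 0 := fun h0 => by
    have := congrArg norm (DFunLike.congr_fun h0 i)
    simp [tent_norm] at this
  choose K hK hKle using fun i => exists_pos_le_integral_norm_sq hA hφ (tent_ne i)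
  obtain ⟨t, -, ht, hcover⟩ := finite_cover_balls_of_compact (isCompact_univ (X := X)) hρ
  have : ∀ᶠ K₀ in 𝓝[>] (0 : ℝ), 0 < K₀ ∧ ∀ i ∈ t, K₀ ≤ K i :=
    eventually_mem_nhdsWithin.and ((ht.eventually_all).mpr fun i _ =>
      eventually_nhdsWithin_of_eventually_nhds (eventually_le_nhds (hK i)))
  obtain ⟨K₀, hK₀, hK₀le⟩ := this.exists
  refine ⟨K₀, hK₀, fun τ hτ μ hμ c => ?_⟩
  obtain ⟨i, hi, hci⟩ := mem_iUnion₂.mp (hcover (mem_univ c))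
  refine (ENNReal.ofReal_le_ofReal ((hK₀le i hi).trans (hKle i τ hτ μ hμ))).trans ?_
  refine integral_le_measure (fun x _ => ?_) (fun x hx => ?_)
  · rw [tent_norm]
    exact pow_le_one₀ (le_max_left _ _) (max_le zero_le_one (sub_le_self _ (by positivity)))
  · have hxi : ρ ≤ dist x i := by
      have := dist_triangle x i c
      simp only [mem_compl_iff, mem_ball, not_lt] at hx
      rw [mem_ball, dist_comm] at hci
      linarith
    have : 1 - dist x i / ρ ≤ 0 := by rw [sub_nonpos, one_le_div hρ]; exact hxi
    simp [tent_norm, this]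

end CStarAlgebra

lemma exists_pos_minorant_tendsto_zero {F : ℝ → ℝ≥0∞} (hF : MonotoneOn F (Ioo 0 1))
    (hF0 : ∀ r ∈ Ioo (0 : ℝ) 1, 0 < F r) :
    ∃ Δ : ℝ → ℝ, (∀ r : ℝ, 0 < r → r < 1 → 0 < Δ r ∧ Δ r < 1) ∧ MonotoneOn Δ (Ioo 0 1) ∧
      Tendsto Δ (𝓝[>] 0) (𝓝 0) ∧ ∀ r ∈ Ioo (0 : ℝ) 1, ENNReal.ofReal (Δ r) ≤ F r := by
  have hne_top (r : ℝ) : min (ENNReal.ofReal r) (F r) ≠ ⊤ :=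
    ne_top_of_le_ne_top ENNReal.ofReal_ne_top (min_le_left _ _)
  have hle (r : ℝ) (hr : 0 ≤ r) : (min (ENNReal.ofReal r) (F r)).toReal ≤ r :=
    (ENNReal.toReal_mono ENNReal.ofReal_ne_top (min_le_left _ _)).trans_eq
      (ENNReal.toReal_ofReal hr)
  refine ⟨fun r => (min (ENNReal.ofReal r) (F r)).toReal, fun r hr hr1 => ⟨?_, ?_⟩,
    fun r hr r' hr' hrr' => ?_, ?_, fun r hr => ?_⟩
  · exact ENNReal.toReal_pos (lt_min (ENNReal.ofReal_pos.mpr hr) (hF0 r ⟨hr, hr1⟩)).ne'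
      (hne_top r)
  · exact (hle r hr.le).trans_lt hr1
  · exact ENNReal.toReal_mono (hne_top r')
      (min_le_min (ENNReal.ofReal_le_ofReal hrr') (hF hr hr' hrr'))
  · refine squeeze_zero' (Eventually.of_forall fun r => ENNReal.toReal_nonneg) ?_
      (tendsto_nhdsWithin_of_tendsto_nhds tendsto_id)
    exact eventually_nhdsWithin_of_forall fun r hr => hle r (le_of_lt hr)
  · rw [ENNReal.ofReal_toReal (hne_top r)]
    exact min_le_right _ _

theorem stmt_15_general {A : Type*} [CStarAlgebra A]
    (hA : IsSimpleCStarAlgebra A)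
    {X : Type*} [MetricSpace X] [CompactSpace X] [MeasurableSpace X]
    (φ : C(X, ℂ) →⋆ₐ[ℂ] A) (hinj : Function.Injective φ) :
    ∃ Δ : ℝ → ℝ,
      (∀ r : ℝ, 0 < r → r < 1 → 0 < Δ r ∧ Δ r < 1) ∧
      MonotoneOn Δ (Set.Ioo (0 : ℝ) 1) ∧
      Filter.Tendsto Δ (nhdsWithin 0 (Set.Ioi 0)) (nhds 0) ∧
      ∀ τ : A →ₗ[ℂ] ℂ, IsTracialState τ →
        ∀ μ : MeasureTheory.Measure X, MeasureTheory.IsProbabilityMeasure μ →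
          (∀ f : C(X, ℂ), τ (φ f) = ∫ t, f t ∂μ) →
          ∀ (c : X) (r : ℝ), 0 < r → r < 1 →
            ENNReal.ofReal (Δ r) ≤ μ (ball c r) := by
  set F : ℝ → ℝ≥0∞ := fun r => ⨅ (τ : A →ₗ[ℂ] ℂ) (_ : IsTracialState τ) (μ : Measure X)
    (_ : ∀ f : C(X, ℂ), τ (φ f) = ∫ t, f t ∂μ) (c : X), μ (ball c r)
  have hF : Monotone F := fun r r' hrr' => by
    dsimp only [F]
    gcongr
  have hF0 (r : ℝ) (hr : r ∈ Ioo (0 : ℝ) 1) : 0 < F r := by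
    obtain ⟨K, hK, hball⟩ := exists_pos_le_measure_ball hA hinj hr.1
    refine (ENNReal.ofReal_pos.mpr hK).trans_le ?_
    simp only [F, le_iInf_iff]
    exact hball
  obtain ⟨Δ, hΔ01, hΔmono, hΔlim, hΔF⟩ := exists_pos_minorant_tendsto_zero (hF.monotoneOn _) hF0
  refine ⟨Δ, hΔ01, hΔmono, hΔlim, fun τ hτ μ _ hμ c r hr hr1 => (hΔF r ⟨hr, hr1⟩).trans ?_⟩
  exact iInf_le_of_le τ <| iInf_le_of_le hτ <| iInf_le_of_le μ <| iInf_le_of_le hμ <| iInf_le _ c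

theorem stmt_15 {A : Type*} [CStarAlgebra A]
    (hA : IsSimpleCStarAlgebra A) (hT : ∃ τ : A →ₗ[ℂ] ℂ, IsTracialState τ)
    {X : Type*} [MetricSpace X] [CompactSpace X] [MeasurableSpace X] [BorelSpace X]
    (φ : C(X, ℂ) →⋆ₐ[ℂ] A) (hinj : Function.Injective φ) :
    ∃ Δ : ℝ → ℝ,
      (∀ r : ℝ, 0 < r → r < 1 → 0 < Δ r ∧ Δ r < 1) ∧
      MonotoneOn Δ (Set.Ioo (0 : ℝ) 1) ∧
      Filter.Tendsto Δ (nhdsWithin 0 (Set.Ioi 0)) (nhds 0) ∧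
      ∀ τ : A →ₗ[ℂ] ℂ, IsTracialState τ →
        ∀ μ : MeasureTheory.Measure X, MeasureTheory.IsProbabilityMeasure μ →
          (∀ f : C(X, ℂ), τ (φ f) = ∫ t, f t ∂μ) →
          ∀ (c : X) (r : ℝ), 0 < r → r < 1 →
            ENNReal.ofReal (Δ r) ≤ μ (ball c r) :=
  stmt_15_general hA φ hinj
end
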